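/- arXiv:2203.10178 — 7 statements merged into one kernel-verified Lean document; each statement's English description precedes it below -/
import Mathlib

section
/- Let M be a probability measure algebra with measure μ, and for n-tuples a, b in M^n let d_P(a,b) = (1/2) Σ_{s ∈ 2^n} μ(p_s △ q_s), where (p_s) and (q_s) are the partitions generated by a and b respectively (with p_s = ⋂_{i<n} a_i^{s(i)}, a_i^0 = a_i, a_i^1 = complement of a_i). Then for all a, b ∈ M^n: max_{i<n} μ(a_i △ b_i) ≤ d_P(a,b) ≤ n·2^{n-1}·max_{i<n} μ(a_i △ b_i). -/
open MeasureTheory Set symmDiff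

/-- The partition element `p_s = ⋂_{i<n} a_i^{s i}`, where `a_i^0 = a_i` and
`a_i^1` is the complement of `a_i`. -/
def partPiece {X : Type*} {n : ℕ} (a : Fin n → Set X) (s : Fin n → Bool) : Set X :=
  ⋂ i, if s i then (a i)ᶜ else a i

/-- The partition metric `d_P(a,b) = (1/2) Σ_{s ∈ 2^n} μ(p_s ∆ q_s)`. -/
noncomputable def dP {X : Type*} [MeasurableSpace X] (μ : Measure X) {n : ℕ}
    (a b : Fin n → Set X) : ℝ :=
  (1 / 2) * ∑ s : Fin n → Bool, (μ (partPiece a s ∆ partPiece b s)).toReal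

/-
Each atom `a i` is the union of the pieces `p_s` with `s i = false`, and its complement the union of
those with `s i = true`; so `a i ∆ b i` (which equals `(a i)ᶜ ∆ (b i)ᶜ`) is covered by the sets
`p_s ∆ q_s` over either half of the index set, and summing the two halves gives
`2 μ(a i ∆ b i) ≤ Σ_s μ(p_s ∆ q_s)`. Conversely `p_s ∆ q_s ⊆ ⋃_i a i ∆ b i`, so each of the `2^n`
terms is at most `n · max_i μ(a i ∆ b i)`.
-/

lemma Set.iInter_symmDiff_iInter_subset {α ι : Type*} {f g : ι → Set α} :
    (⋂ i, f i) ∆ (⋂ i, g i) ⊆ ⋃ i, f i ∆ g i := by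
  rw [← compl_symmDiff_compl, compl_iInter, compl_iInter]
  simpa only [compl_symmDiff_compl] using
    iUnion_symmDiff_iUnion_subset (f := fun i => (f i)ᶜ) (g := fun i => (g i)ᶜ)

lemma ite_compl_symmDiff_ite_compl {α : Type*} (v : Bool) (s t : Set α) :
    (if v then sᶜ else s) ∆ (if v then tᶜ else t) = s ∆ t := by
  cases v <;> simp

section partPiece

variable {X : Type*} {n : ℕ}

lemma mem_partPiece_iff {a : Fin n → Set X} {s : Fin n → Bool} {x : X} :
    x ∈ partPiece a s ↔ ∀ i, (x ∈ a i ↔ s i = false) := by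
  simp only [partPiece, mem_iInter]
  refine forall_congr' fun i => ?_
  cases s i <;> simp

lemma biUnion_partPiece_eq (a : Fin n → Set X) (i : Fin n) (v : Bool) :
    ⋃ s ∈ ({s | s i = v} : Finset (Fin n → Bool)), partPiece a s =
      if v then (a i)ᶜ else a i := by
  classical
  ext x
  simp only [Finset.mem_filter, Finset.mem_univ, true_and, mem_iUnion, exists_prop]
  constructor
  · rintro ⟨s, rfl, hx⟩
    have := mem_partPiece_iff.1 hx i
    cases h : s i <;> simp_all
  · intro hx
    refine ⟨fun j => decide (x ∉ a j), ?_, mem_partPiece_iff.2 fun j => by simp⟩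
    cases v <;> simp_all

lemma partPiece_symmDiff_subset (a b : Fin n → Set X) (s : Fin n → Bool) :
    partPiece a s ∆ partPiece b s ⊆ ⋃ i, a i ∆ b i :=
  (Set.iInter_symmDiff_iInter_subset (f := fun i => if s i then (a i)ᶜ else a i)
    (g := fun i => if s i then (b i)ᶜ else b i)).trans
    (iUnion_mono fun i => (ite_compl_symmDiff_ite_compl (s i) (a i) (b i)).le)

variable [MeasurableSpace X] (μ : Measure X)

lemma measureReal_symmDiff_le_sum_partPiece [IsFiniteMeasure μ] (a b : Fin n → Set X) (i : Fin n)
    (v : Bool) :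
    μ.real (a i ∆ b i) ≤
      ∑ s ∈ ({s | s i = v} : Finset (Fin n → Bool)), μ.real (partPiece a s ∆ partPiece b s) := by
  rw [← ite_compl_symmDiff_ite_compl v, ← biUnion_partPiece_eq a i v,
    ← biUnion_partPiece_eq b i v]
  exact (measureReal_mono (Set.iUnion_symmDiff_iUnion_subset.trans
    (iUnion_mono fun _ => Set.iUnion_symmDiff_iUnion_subset)) (measure_ne_top μ _)).trans
    (measureReal_biUnion_finset_le _ _)

lemma two_mul_measureReal_symmDiff_le_sum_partPiece [IsFiniteMeasure μ] (a b : Fin n → Set X)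
    (i : Fin n) :
    2 * μ.real (a i ∆ b i) ≤ ∑ s, μ.real (partPiece a s ∆ partPiece b s) :=
  calc 2 * μ.real (a i ∆ b i) = ∑ _v : Bool, μ.real (a i ∆ b i) := by simp [two_mul]
    _ ≤ ∑ v : Bool, ∑ s ∈ ({s | s i = v} : Finset (Fin n → Bool)),
          μ.real (partPiece a s ∆ partPiece b s) :=
        Finset.sum_le_sum fun v _ => measureReal_symmDiff_le_sum_partPiece μ a b i v
    _ = ∑ s, μ.real (partPiece a s ∆ partPiece b s) := Finset.sum_fiberwise _ _ _

lemma measureReal_partPiece_symmDiff_le_sum [IsFiniteMeasure μ] (a b : Fin n → Set X)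
    (s : Fin n → Bool) :
    μ.real (partPiece a s ∆ partPiece b s) ≤ ∑ i, μ.real (a i ∆ b i) :=
  (measureReal_mono (partPiece_symmDiff_subset a b s) (measure_ne_top μ _)).trans
    (measureReal_iUnion_fintype_le _)

end partPiece

lemma sum_le_card_mul_iSup {ι : Type*} [Fintype ι] (f : ι → ℝ) :
    ∑ i, f i ≤ Fintype.card ι * ⨆ i, f i := by
  have := Finset.sum_le_card_nsmul Finset.univ f _ fun i _ =>
    le_ciSup (Set.finite_range f).bddAbove i
  rwa [Finset.card_univ, nsmul_eq_mul] at this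

theorem dP_equiv_max_general {X : Type*} [MeasurableSpace X] (μ : Measure X) [IsProbabilityMeasure μ]
    {n : ℕ} (a b : Fin n → Set X) :
    (⨆ i : Fin n, (μ (a i ∆ b i)).toReal) ≤ dP μ a b ∧
      dP μ a b ≤ (n : ℝ) * 2 ^ (n - 1) * ⨆ i : Fin n, (μ (a i ∆ b i)).toReal := by
  simp only [dP, ← measureReal_def]
  set M := ⨆ i, μ.real (a i ∆ b i)
  constructor
  · refine Real.iSup_le (fun i => ?_) (by positivity)
    linarith [two_mul_measureReal_symmDiff_le_sum_partPiece μ a b i]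
  · calc 1 / 2 * ∑ s, μ.real (partPiece a s ∆ partPiece b s)
        ≤ 1 / 2 * ∑ _s : Fin n → Bool, n * M := by
          gcongr with s
          simpa only [Fintype.card_fin] using (measureReal_partPiece_symmDiff_le_sum μ a b s).trans
            (sum_le_card_mul_iSup _)
      _ = n * 2 ^ (n - 1) * M := by
          rcases n with _ | n
          · simp
          · simp [pow_succ]
            ring

/-- The partition metric is equivalent to the max (symmetric-difference) metric on tuples:
`max_{i<n} μ(a_i ∆ b_i) ≤ d_P(a,b) ≤ n·2^{n-1}·max_{i<n} μ(a_i ∆ b_i)`. -/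
theorem dP_equiv_max {X : Type*} [MeasurableSpace X] (μ : Measure X) [IsProbabilityMeasure μ]
    {n : ℕ} (a b : Fin n → Set X)
    (ha : ∀ i, MeasurableSet (a i)) (hb : ∀ i, MeasurableSet (b i)) :
    (⨆ i : Fin n, (μ (a i ∆ b i)).toReal) ≤ dP μ a b ∧
      dP μ a b ≤ (n : ℝ) * 2 ^ (n - 1) * ⨆ i : Fin n, (μ (a i ∆ b i)).toReal :=
  dP_equiv_max_general μ a b
end

section
/- Let G be a Polish group equipped with an additional bi-invariant metric ∂ that refines the topology of G, let k ≥ 1, and suppose ḡ ∈ G^k is such that the ∂-closure of the diagonal conjugacy class G·ḡ = { (hg_1h^{-1},…,hg_kh^{-1}) : h ∈ G } is comeager in G^k. Then for every open neighborhood U of the identity in G and every η > 0, there exists an open neighborhood V of ḡ in G^k such that the η-fattening (U·ḡ)_η = { h̄ ∈ G^k : ∃u∈U, ∂(h̄, u·ḡ) < η } is dense in V. -/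
/-!
Diagonal conjugation on `G^k` is conjugation by the diagonal copy of `G`, and the max-extension
of `∂` is again bi-invariant, so the argument takes place in an arbitrary topological group `H`
with a bi-invariant distance `D` and a homomorphism `φ : G → H`.

Let `U₀` be a neighbourhood of `1` with `U₀⁻¹ U₀ ⊆ U`. If `x` is `η/2`-close to `u·h₀` and `d`
is close to `u`, then `d⁻¹·x` lies in the fattening `(U₀·h₀)_{η/2}`. Hence countably many
conjugates of this fattening, by a dense sequence, cover the `D`-closure of the orbit; that
closure is comeagre, so by Baire one conjugate, and thus the fattening itself, is dense in a
nonempty open set `M`. Pick `z ∈ M` that is `η/2`-close to some `v·h₀` with `v ∈ U₀`. The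
homeomorphism `x ↦ z (v·h₀)⁻¹ (v·x)` sends `h₀` to `z`, and it pulls `(U₀·h₀)_{η/2}` back into
`(U·h₀)_η`; the preimage of `M` is the required `V`.
-/

open Set Topology ConjAct

structure IsBiInvariantDist {G : Type*} [Group G] (d : G → G → ℝ) : Prop where
  symm : ∀ g h, d g h = d h g
  triangle : ∀ g h l, d g l ≤ d g h + d h l
  mul_left : ∀ g h l, d (l * g) (l * h) = d g h
  mul_right : ∀ g h l, d (g * l) (h * l) = d g h

namespace IsBiInvariantDist

variable {G : Type*} [Group G] {d : G → G → ℝ}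

theorem nonneg (hd : IsBiInvariantDist d) (g h : G) : 0 ≤ d g h := by
  linarith [hd.triangle g g g, hd.triangle g h g, hd.symm g h]

theorem conj (hd : IsBiInvariantDist d) (a g h : G) : d (a * g * a⁻¹) (a * h * a⁻¹) = d g h := by
  rw [hd.mul_right, hd.mul_left]

theorem pi {ι : Type*} [Finite ι] (hd : IsBiInvariantDist d) :
    IsBiInvariantDist fun x y : ι → G => ⨆ i, d (x i) (y i) where
  symm x y := iSup_congr fun i => hd.symm _ _
  triangle x y z := by
    have hle (x y : ι → G) (i : ι) : d (x i) (y i) ≤ ⨆ j, d (x j) (y j) :=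
      le_ciSup (f := fun j => d (x j) (y j)) (Finite.bddAbove_range _) i
    have hnonneg (x y : ι → G) : 0 ≤ ⨆ j, d (x j) (y j) := Real.iSup_nonneg fun _ => hd.nonneg _ _
    exact Real.iSup_le (fun i => (hd.triangle _ (y i) _).trans (add_le_add (hle x y i) (hle y z i)))
      (add_nonneg (hnonneg x y) (hnonneg y z))
  mul_left x y l := iSup_congr fun i => hd.mul_left _ _ _
  mul_right x y l := iSup_congr fun i => hd.mul_right _ _ _

end IsBiInvariantDist

theorem IsNowhereDense.preimage_homeomorph {X Y : Type*} [TopologicalSpace X] [TopologicalSpace Y]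
    {s : Set Y} (hs : IsNowhereDense s) (e : X ≃ₜ Y) : IsNowhereDense (e ⁻¹' s) := by
  rw [IsNowhereDense, ← e.preimage_closure, ← e.preimage_interior, hs, preimage_empty]

theorem exists_not_isNowhereDense_of_mem_residual_subset_biUnion {X ι : Type*}
    [TopologicalSpace X] [BaireSpace X] [Nonempty X] {s : Set X} (hs : s ∈ residual X)
    {I : Set ι} (hI : I.Countable) {t : ι → Set X} (hst : s ⊆ ⋃ i ∈ I, t i) :
    ∃ i ∈ I, ¬IsNowhereDense (t i) := by
  by_contra! h
  exact not_isMeagre_of_mem_residual hs <| isMeagre_iff_countable_union_isNowhereDense.2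
    ⟨t '' I, forall_mem_image.2 h, hI.image t, by rwa [sUnion_image]⟩

theorem exists_isOpen_one_mem_forall_inv_mul_mem {G : Type*} [Group G] [TopologicalSpace G]
    [IsTopologicalGroup G] {U : Set G} (hU : U ∈ 𝓝 (1 : G)) :
    ∃ U₀ : Set G, IsOpen U₀ ∧ (1 : G) ∈ U₀ ∧ ∀ v ∈ U₀, ∀ w ∈ U₀, v⁻¹ * w ∈ U := by
  obtain ⟨W, hWo, hW1, hWU⟩ := exists_open_nhds_one_mul_subset hU
  exact ⟨W ∩ W⁻¹, hWo.inter hWo.inv, ⟨hW1, by simpa using hW1⟩,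
    fun v hv w hw => hWU (Set.mul_mem_mul hv.2 hw.1)⟩

section OrbitFattening

variable {G H : Type*} [Group G] [Group H] (φ : G →* H) (D : H → H → ℝ) (h₀ : H)

def orbitFattening (U : Set G) (η : ℝ) : Set H :=
  {x | ∃ u ∈ U, D x (φ u * h₀ * (φ u)⁻¹) < η}

variable {φ D h₀}

theorem orbitFattening_subset_biUnion_conj [TopologicalSpace G] [IsTopologicalGroup G]
    [TopologicalSpace H] [IsTopologicalGroup H] (hD : IsBiInvariantDist D) {U₀ : Set G}
    (hU₀ : IsOpen U₀) (hU₀1 : (1 : G) ∈ U₀) {s : Set G} (hs : Dense s) (η : ℝ) :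
    orbitFattening φ D h₀ univ η ⊆
      ⋃ d ∈ s, Homeomorph.smul (toConjAct (φ d⁻¹)) ⁻¹' orbitFattening φ D h₀ U₀ η := by
  rintro x ⟨u, -, hu⟩
  have hopen : IsOpen {d : G | d⁻¹ * u ∈ U₀} :=
    hU₀.preimage (continuous_inv.mul continuous_const)
  obtain ⟨d, hd, hdu⟩ := hs.exists_mem_open hopen ⟨u, by simpa using hU₀1⟩
  refine mem_biUnion hd ⟨d⁻¹ * u, hdu, ?_⟩
  have hconj :
      φ (d⁻¹ * u) * h₀ * (φ (d⁻¹ * u))⁻¹ = φ d⁻¹ * (φ u * h₀ * (φ u)⁻¹) * (φ d⁻¹)⁻¹ := by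
    rw [map_mul]
    group
  change D (φ d⁻¹ * x * (φ d⁻¹)⁻¹) (φ (d⁻¹ * u) * h₀ * (φ (d⁻¹ * u))⁻¹) < η
  rwa [hconj, hD.conj]

theorem preimage_orbitFattening_subset (hD : IsBiInvariantDist D) {U₀ U : Set G}
    (hU : ∀ v ∈ U₀, ∀ w ∈ U₀, v⁻¹ * w ∈ U) {v : G} (hv : v ∈ U₀) {z : H} {ε : ℝ}
    (hz : D z (φ v * h₀ * (φ v)⁻¹) < ε) (δ : ℝ) :
    (fun x => z * (φ v * h₀ * (φ v)⁻¹)⁻¹ * (φ v * x * (φ v)⁻¹)) ⁻¹'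
      orbitFattening φ D h₀ U₀ δ ⊆ orbitFattening φ D h₀ U (ε + δ) := by
  rintro x ⟨w, hw, hxw⟩
  set c := φ v * h₀ * (φ v)⁻¹
  set y := φ v * x * (φ v)⁻¹
  have hy : D y (z * c⁻¹ * y) = D z c := by
    rw [hD.symm z, ← hD.mul_right c z c⁻¹, mul_inv_cancel, ← hD.mul_right 1 _ y, one_mul]
  refine ⟨v⁻¹ * w, hU v hv w hw, ?_⟩
  calc D x (φ (v⁻¹ * w) * h₀ * (φ (v⁻¹ * w))⁻¹)
      = D y (φ w * h₀ * (φ w)⁻¹) := by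
        rw [← hD.conj (φ v), map_mul, map_inv]
        congr 1
        group
    _ ≤ D y (z * c⁻¹ * y) + D (z * c⁻¹ * y) (φ w * h₀ * (φ w)⁻¹) := hD.triangle _ _ _
    _ < ε + δ := by rw [hy]; exact add_lt_add hz hxw

theorem exists_isOpen_mem_subset_closure_orbitFattening [TopologicalSpace H]
    [IsTopologicalGroup H] (hD : IsBiInvariantDist D) {U₀ U : Set G}
    (hU : ∀ v ∈ U₀, ∀ w ∈ U₀, v⁻¹ * w ∈ U) {δ : ℝ}
    (hF : (interior (closure (orbitFattening φ D h₀ U₀ δ))).Nonempty) :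
    ∃ V : Set H, IsOpen V ∧ h₀ ∈ V ∧ V ⊆ closure (orbitFattening φ D h₀ U (δ + δ)) := by
  set F := orbitFattening φ D h₀ U₀ δ
  obtain ⟨z, ⟨v, hv, hz⟩, hzM⟩ : (F ∩ interior (closure F)).Nonempty := by
    rwa [← closure_inter_open_nonempty_iff isOpen_interior, inter_eq_right.2 interior_subset]
  set c := φ v * h₀ * (φ v)⁻¹
  let ρ : H ≃ₜ H := (Homeomorph.smul (toConjAct (φ v))).trans (Homeomorph.mulLeft (z * c⁻¹))
  refine ⟨ρ ⁻¹' interior (closure F), isOpen_interior.preimage ρ.continuous, ?_, ?_⟩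
  · change z * c⁻¹ * c ∈ interior (closure F)
    rwa [inv_mul_cancel_right]
  · calc ρ ⁻¹' interior (closure F) ⊆ ρ ⁻¹' closure F := preimage_mono interior_subset
      _ = closure (ρ ⁻¹' F) := ρ.preimage_closure F
      _ ⊆ _ := closure_mono (preimage_orbitFattening_subset hD hU hv hz δ)

theorem exists_isOpen_mem_subset_closure_orbitFattening_of_residual [TopologicalSpace G]
    [IsTopologicalGroup G] [TopologicalSpace.SeparableSpace G] [TopologicalSpace H]
    [IsTopologicalGroup H] [BaireSpace H] (hD : IsBiInvariantDist D)
    (hS : {x | ∀ η > (0 : ℝ), ∃ u : G, D x (φ u * h₀ * (φ u)⁻¹) < η} ∈ residual H)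
    {U : Set G} (hUo : IsOpen U) (hU1 : (1 : G) ∈ U) {η : ℝ} (hη : 0 < η) :
    ∃ V : Set H, IsOpen V ∧ h₀ ∈ V ∧ V ⊆ closure (orbitFattening φ D h₀ U η) := by
  obtain ⟨U₀, hU₀o, hU₀1, hU₀U⟩ := exists_isOpen_one_mem_forall_inv_mul_mem (hUo.mem_nhds hU1)
  obtain ⟨s, hsc, hsd⟩ := TopologicalSpace.exists_countable_dense G
  have hS_sub : {x | ∀ η > (0 : ℝ), ∃ u : G, D x (φ u * h₀ * (φ u)⁻¹) < η} ⊆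
      orbitFattening φ D h₀ univ (η / 2) := fun x hx =>
    let ⟨u, hu⟩ := hx (η / 2) (half_pos hη)
    ⟨u, mem_univ u, hu⟩
  have hcover := hS_sub.trans (orbitFattening_subset_biUnion_conj hD hU₀o hU₀1 hsd (η / 2))
  obtain ⟨d, -, hd⟩ := exists_not_isNowhereDense_of_mem_residual_subset_biUnion hS hsc hcover
  have hF : (interior (closure (orbitFattening φ D h₀ U₀ (η / 2)))).Nonempty :=
    nonempty_iff_ne_empty.2 fun h => hd (IsNowhereDense.preimage_homeomorph h _)
  simpa only [add_halves] using exists_isOpen_mem_subset_closure_orbitFattening hD hU₀U hF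

end OrbitFattening

theorem fattening_dense_near_metric_generic_general {G : Type*} [Group G] [TopologicalSpace G]
    [IsTopologicalGroup G] [PolishSpace G] (k : ℕ)
    (del : G → G → ℝ)
    (hsymm : ∀ g h : G, del g h = del h g)
    (htri : ∀ g h l : G, del g l ≤ del g h + del h l)
    (hleft : ∀ g h l : G, del (l * g) (l * h) = del g h)
    (hright : ∀ g h l : G, del (g * l) (h * l) = del g h)
    (gbar : Fin k → G)
    -- the `∂`-closure of the diagonal conjugacy class of `gbar` is comeager in `G^k`
    (hcomeager :
      {x : Fin k → G | ∀ η > (0 : ℝ), ∃ u : G,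
          (⨆ i, del (x i) (u * gbar i * u⁻¹)) < η} ∈ residual (Fin k → G)) :
    ∀ U : Set G, IsOpen U → (1 : G) ∈ U → ∀ η > (0 : ℝ),
      ∃ V : Set (Fin k → G), IsOpen V ∧ gbar ∈ V ∧
        V ⊆ closure {x : Fin k → G | ∃ u ∈ U,
          (⨆ i, del (x i) (u * gbar i * u⁻¹)) < η} := by
  intro U hUo hU1 η hη
  have hdel : IsBiInvariantDist del := ⟨hsymm, htri, hleft, hright⟩
  exact exists_isOpen_mem_subset_closure_orbitFattening_of_residual (φ := Pi.constMonoidHom _ G)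
    hdel.pi hcomeager hUo hU1 hη

/-- Let `G` be a Polish group with a bi-invariant metric `∂` refining its topology, extended
to `G^k` by the maximum. If `ḡ ∈ G^k` is such that the `∂`-closure of its diagonal conjugacy
class is comeager in `G^k`, then for every open neighborhood `U` of the identity and every
`η > 0`, the `η`-fattening of `U·ḡ` is dense in some open neighborhood `V` of `ḡ`. -/
theorem fattening_dense_near_metric_generic {G : Type*} [Group G] [TopologicalSpace G]
    [IsTopologicalGroup G] [PolishSpace G] (k : ℕ) (hk : 1 ≤ k)
    (del : G → G → ℝ)
    (hsymm : ∀ g h : G, del g h = del h g)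
    (htri : ∀ g h l : G, del g l ≤ del g h + del h l)
    (hzero : ∀ g h : G, del g h = 0 ↔ g = h)
    (hleft : ∀ g h l : G, del (l * g) (l * h) = del g h)
    (hright : ∀ g h l : G, del (g * l) (h * l) = del g h)
    -- `∂` refines the topology of `G`
    (hfine : ∀ U : Set G, IsOpen U → ∀ g ∈ U, ∃ ε > (0 : ℝ), ∀ h, del h g < ε → h ∈ U)
    (gbar : Fin k → G)
    -- the `∂`-closure of the diagonal conjugacy class of `gbar` is comeager in `G^k`
    (hcomeager :
      {x : Fin k → G | ∀ η > (0 : ℝ), ∃ u : G,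
          (⨆ i, del (x i) (u * gbar i * u⁻¹)) < η} ∈ residual (Fin k → G)) :
    ∀ U : Set G, IsOpen U → (1 : G) ∈ U → ∀ η > (0 : ℝ),
      ∃ V : Set (Fin k → G), IsOpen V ∧ gbar ∈ V ∧
        V ⊆ closure {x : Fin k → G | ∃ u ∈ U,
          (⨆ i, del (x i) (u * gbar i * u⁻¹)) < η} :=
  fattening_dense_near_metric_generic_general k del hsymm htri hleft hright gbar hcomeager
end

section
/- Let Ĝ be the profinite completion of the free group F_k with Haar probability measure μ, and let N be its Boolean algebra of clopen sets. Then (N, μ) is a good measure: for every clopen a and every rational s with 0 ≤ s ≤ μ(a), there exists a clopen b ⊆ a with μ(b) = s. -/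
/-!
A clopen set `a` of a compact totally disconnected group is a union of left cosets of some open
subgroup `H`. Intersecting `H` with an open subgroup of index `den s` gives an open subgroup `L`
of index `m` divisible by `den s`; by left invariance every coset of `L` has measure `1 / m`, so
`μ a = |A| / m` for the finite set `A` of cosets making up `a`, while `s = j / m` with `j ≤ |A|`.
The union of any `j` of these cosets is the required clopen set.
-/

open MeasureTheory Pointwise
open scoped ENNReal

lemma IsClopen.exists_openSubgroup_mul_subset {G : Type*} [Group G] [TopologicalSpace G]
    [IsTopologicalGroup G] [CompactSpace G] [TotallyDisconnectedSpace G] {W : Set G}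
    (hW : IsClopen W) : ∃ H : OpenSubgroup G, W * (H : Set G) ⊆ W := by
  obtain ⟨T, hT, hWT⟩ := IsTopologicalGroup.exist_mul_closure_nhds hW
  obtain ⟨U, hUT, hU, h1U⟩ := mem_nhds_iff.mp hT
  obtain ⟨N, hNU⟩ := ProfiniteGrp.exist_openNormalSubgroup_sub_open_nhds_of_one hU h1U
  exact ⟨N.toOpenSubgroup, (Set.mul_subset_mul_left (hNU.trans hUT)).trans hWT⟩

lemma Rat.exists_natCast_div_eq_of_den_dvd {q : ℚ} (hq : 0 ≤ q) {m : ℕ} (hm : q.den ∣ m)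
    (hm0 : m ≠ 0) : ∃ j : ℕ, (j : ℚ) / m = q := by
  obtain ⟨t, rfl⟩ := hm
  refine ⟨q.num.toNat * t, ?_⟩
  have ht : (t : ℚ) ≠ 0 := by simp_all
  rw [Nat.cast_mul, Nat.cast_mul, mul_div_mul_right _ _ ht, ← Int.cast_natCast,
    Int.toNat_of_nonneg (Rat.num_nonneg.mpr hq), Rat.num_div_den]

namespace QuotientGroup

variable {G : Type*} [Group G]

lemma preimage_mk_singleton_eq_smul (L : Subgroup G) (c : G ⧸ L) :
    ((↑) ⁻¹' {c} : Set G) = c.out • (L : Set G) := by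
  rw [← out_eq' c, ← Set.image_singleton, preimage_image_mk_eq_mul, Set.singleton_mul, out_eq']
  rfl

lemma preimage_image_mk_eq_of_mul_subset {L : Subgroup G} {a : Set G}
    (ha : a * (L : Set G) ⊆ a) : ((↑) ⁻¹' ((↑) '' a : Set (G ⧸ L)) : Set G) = a := by
  rw [preimage_image_mk_eq_mul]
  exact ha.antisymm (Set.subset_mul_left a L.one_mem)

variable [MeasurableSpace G] [MeasurableMul G] (μ : Measure G) [μ.IsMulLeftInvariant]

lemma measure_preimage_mk_finset {L : Subgroup G} (hL : MeasurableSet (L : Set G))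
    (S : Finset (G ⧸ L)) : μ ((↑) ⁻¹' (S : Set (G ⧸ L))) = S.card * μ L := by
  rw [← Set.biUnion_preimage_singleton, Finset.set_biUnion_coe, measure_biUnion_finset]
  · simp [preimage_mk_singleton_eq_smul, measure_smul]
  · exact (Set.pairwiseDisjoint_fiber _ _).subset (Set.subset_univ _)
  · intro c _
    rw [preimage_mk_singleton_eq_smul]
    exact hL.const_smul _

variable [IsProbabilityMeasure μ]

lemma measure_preimage_mk_finset_eq_div_index {L : Subgroup G} [L.FiniteIndex]
    (hL : MeasurableSet (L : Set G)) (S : Finset (G ⧸ L)) :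
    μ ((↑) ⁻¹' (S : Set (G ⧸ L))) = S.card / L.index := by
  have hμL : μ L = (L.index : ℝ≥0∞)⁻¹ :=
    ENNReal.eq_inv_of_mul_eq_one_left (by rw [mul_comm, L.index_mul_measure hL, measure_univ])
  rw [measure_preimage_mk_finset μ hL, hμL, div_eq_mul_inv]

lemma exists_preimage_mk_subset_measure_eq {L : Subgroup G} [L.FiniteIndex]
    (hL : MeasurableSet (L : Set G)) {a : Set G} (ha : a * (L : Set G) ⊆ a) {j : ℕ}
    (hj : (j : ℝ≥0∞) / L.index ≤ μ a) :
    ∃ B : Set (G ⧸ L), (↑) ⁻¹' B ⊆ a ∧ μ ((↑) ⁻¹' B) = j / L.index := by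
  set A := (Set.toFinite ((↑) '' a : Set (G ⧸ L))).toFinset
  have hμa : μ a = A.card / L.index := by
    rw [← measure_preimage_mk_finset_eq_div_index μ hL, Set.Finite.coe_toFinset,
      preimage_image_mk_eq_of_mul_subset ha]
  have hm : (L.index : ℝ≥0∞) ≠ 0 := by simpa using L.index_ne_zero_of_finite
  have hjA : j ≤ A.card := by
    rw [hμa] at hj
    exact_mod_cast calc (j : ℝ≥0∞)
        _ = j / L.index * L.index := (ENNReal.div_mul_cancel hm (by simp)).symm
        _ ≤ A.card / L.index * L.index := by gcongr
        _ = A.card := ENNReal.div_mul_cancel hm (by simp)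
  obtain ⟨B, hBA, rfl⟩ := Finset.exists_subset_card_eq hjA
  refine ⟨B, ?_, measure_preimage_mk_finset_eq_div_index μ hL B⟩
  calc ((↑) ⁻¹' (B : Set (G ⧸ L)) : Set G)
      _ ⊆ (↑) ⁻¹' (A : Set (G ⧸ L)) := Set.preimage_mono (by exact_mod_cast hBA)
      _ = a := by rw [Set.Finite.coe_toFinset, preimage_image_mk_eq_of_mul_subset ha]

end QuotientGroup

theorem haar_clopen_good_measure_general {G : Type*} [Group G] [TopologicalSpace G]
    [IsTopologicalGroup G] [CompactSpace G] [TotallyDisconnectedSpace G]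
    [MeasurableSpace G] [BorelSpace G]
    (μ : Measure G) [IsProbabilityMeasure μ] [μ.IsMulLeftInvariant]
    (hidx : ∀ n : ℕ, 0 < n →
      ∃ H : Subgroup G, H.Normal ∧ IsOpen (H : Set G) ∧ H.index = n) :
    ∀ a : Set G, IsClopen a → ∀ s : ℚ, 0 ≤ s → ENNReal.ofReal (s : ℝ) ≤ μ a →
      ∃ b : Set G, IsClopen b ∧ b ⊆ a ∧ μ b = ENNReal.ofReal (s : ℝ) := by
  intro a ha s hs hsa
  obtain ⟨H, haH⟩ := ha.exists_openSubgroup_mul_subset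
  obtain ⟨K, -, hK, hKs⟩ := hidx s.den s.pos
  let L : OpenSubgroup G := H ⊓ ⟨K, hK⟩
  have : (L : Subgroup G).FiniteIndex := Subgroup.finiteIndex_of_finite_quotient
  have hL : L.index ≠ 0 := Subgroup.index_ne_zero_of_finite
  have hsL : s.den ∣ L.index := hKs ▸ Subgroup.index_dvd_of_le inf_le_right
  obtain ⟨j, rfl⟩ := Rat.exists_natCast_div_eq_of_den_dvd hs hsL hL
  have hj : ENNReal.ofReal ((j / L.index : ℚ) : ℝ) = (j : ℝ≥0∞) / L.index := by
    rw [Rat.cast_div, Rat.cast_natCast, Rat.cast_natCast,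
      ENNReal.ofReal_div_of_pos (by positivity), ENNReal.ofReal_natCast, ENNReal.ofReal_natCast]
  obtain ⟨B, hBa, hμB⟩ := QuotientGroup.exists_preimage_mk_subset_measure_eq μ
    L.isOpen.measurableSet ((Set.mul_subset_mul_left inf_le_left).trans haH) (hj ▸ hsa)
  exact ⟨_, (isClopen_discrete B).preimage QuotientGroup.continuous_mk, hBa, hj ▸ hμB⟩

/-- Let `G` be a profinite group having open normal subgroups of every finite index — such
as the profinite completion of a finitely generated free group — with Haar probability
measure `μ`. Then the clopen algebra of `G` with `μ` is a good measure: for every clopen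
`a` and every rational `s` with `0 ≤ s ≤ μ(a)`, there is a clopen `b ⊆ a` with `μ(b) = s`. -/
theorem haar_clopen_good_measure {G : Type*} [Group G] [TopologicalSpace G]
    [IsTopologicalGroup G] [CompactSpace G] [T2Space G] [TotallyDisconnectedSpace G]
    [MeasurableSpace G] [BorelSpace G]
    (μ : Measure G) [IsProbabilityMeasure μ] [μ.IsMulLeftInvariant] [μ.Regular]
    (hidx : ∀ n : ℕ, 0 < n →
      ∃ H : Subgroup G, H.Normal ∧ IsOpen (H : Set G) ∧ H.index = n) :
    ∀ a : Set G, IsClopen a → ∀ s : ℚ, 0 ≤ s → ENNReal.ofReal (s : ℝ) ≤ μ a →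
      ∃ b : Set G, IsClopen b ∧ b ⊆ a ∧ μ b = ENNReal.ofReal (s : ℝ) :=
  haar_clopen_good_measure_general μ hidx
end

section
/- Let G be a Polish group acting continuously on a Polish space Z (e.g., Z = G^k with diagonal conjugation), and let z ∈ Z have dense orbit G·z. Equip Z additionally with a G-invariant metric ∂ refining its topology. If the ∂-closure of G·z is comeager in Z, then for every identity neighborhood U ⊆ G and η > 0 there is a nonempty open V ⊆ Z in which (U·z)_η is dense; consequently some translate of (W·z)_{η/2}, for W open with W^{-1}W ⊆ U, is non-meager. -/
/-!
Cover `G` by countably many translates `gₙ W`. If `∂(y, g·z) < η/2` and `g = gₙ w` with `w ∈ W`,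
then invariance of `∂` gives `∂(gₙ⁻¹·y, w·z) < η/2`, so the `∂`-closure of `G·z` lies in
`⋃ₙ gₙ·(W·z)_{η/2}`. That closure is comeager, so by Baire some `gₙ·(W·z)_{η/2}` is non-meagre.
Translating back by the homeomorphism `gₙ⁻¹`, the set `(W·z)_{η/2} ⊆ (U·z)_η` is non-meagre,
hence dense in some nonempty open set.
-/

open Set Topology

theorem exists_isOpen_one_mem_inv_mul_mem {G : Type*} [Group G] [TopologicalSpace G]
    [IsTopologicalGroup G] {U : Set G} (hU : U ∈ 𝓝 (1 : G)) :
    ∃ W : Set G, IsOpen W ∧ (1 : G) ∈ W ∧ ∀ w ∈ W, ∀ w' ∈ W, w⁻¹ * w' ∈ U := by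
  have h : (fun p : G × G => p.1⁻¹ * p.2) ⁻¹' U ∈ 𝓝 ((1 : G), (1 : G)) :=
    (continuous_fst.inv.mul continuous_snd).continuousAt.preimage_mem_nhds (by simpa using hU)
  simpa only [prod_subset_iff, mem_preimage] using exists_nhds_square h

theorem exists_seq_forall_eq_mul_mem {G : Type*} [Group G] [TopologicalSpace G]
    [IsTopologicalGroup G] [TopologicalSpace.SeparableSpace G] {W : Set G} (hW : IsOpen W)
    (hne : W.Nonempty) : ∃ gs : ℕ → G, ∀ x : G, ∃ n, ∃ w ∈ W, x = gs n * w := by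
  obtain ⟨w₀, hw₀⟩ := hne
  have : Nonempty G := ⟨w₀⟩
  refine ⟨TopologicalSpace.denseSeq G, fun x => ?_⟩
  have hopen : IsOpen {g : G | g⁻¹ * x ∈ W} := hW.preimage (by fun_prop)
  obtain ⟨n, hn⟩ := (TopologicalSpace.denseRange_denseSeq G).exists_mem_open hopen
    ⟨x * w₀⁻¹, by simpa using hw₀⟩
  exact ⟨n, _, hn, by group⟩

theorem exists_not_isMeagre_of_mem_residual_subset_iUnion {X ι : Type*} [TopologicalSpace X]
    [BaireSpace X] [Nonempty X] [Countable ι] {s : Set X} (hs : s ∈ residual X)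
    {t : ι → Set X} (hst : s ⊆ ⋃ i, t i) : ∃ i, ¬IsMeagre (t i) := by
  by_contra! h
  exact not_isMeagre_of_mem_residual hs ((isMeagre_iUnion h).mono hst)

theorem exists_isOpen_nonempty_subset_closure_of_not_isMeagre {X : Type*} [TopologicalSpace X]
    {s : Set X} (hs : ¬IsMeagre s) : ∃ V : Set X, IsOpen V ∧ V.Nonempty ∧ V ⊆ closure s :=
  ⟨interior (closure s), isOpen_interior,
    nonempty_iff_ne_empty.2 (mt IsNowhereDense.isMeagre hs), interior_subset⟩

section OrbitThickening

variable {G Z : Type*}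

/-- The `η`-fattening `(W·z)_η` of the partial orbit `W·z` with respect to `del`. -/
def orbitThickening [SMul G Z] (del : Z → Z → ℝ) (W : Set G) (z : Z) (η : ℝ) : Set Z :=
  {y | ∃ w ∈ W, del y (w • z) < η}

theorem orbitThickening_mono [SMul G Z] {del : Z → Z → ℝ} {W U : Set G} {z : Z} {η η' : ℝ}
    (hWU : W ⊆ U) (hη : η ≤ η') : orbitThickening del W z η ⊆ orbitThickening del U z η' :=
  fun _ ⟨w, hw, hy⟩ => ⟨w, hWU hw, hy.trans_le hη⟩

variable [Group G] [MulAction G Z] {del : Z → Z → ℝ}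

theorem inv_smul_mem_orbitThickening (hinv : ∀ (g : G) (y y' : Z), del (g • y) (g • y') = del y y')
    {W : Set G} {z y : Z} {η : ℝ} {g w : G} (hw : w ∈ W) (hy : del y ((g * w) • z) < η) :
    g⁻¹ • y ∈ orbitThickening del W z η := by
  refine ⟨w, hw, ?_⟩
  rwa [← hinv g, smul_inv_smul, ← mul_smul]

theorem setOf_approx_orbit_subset_iUnion_image_smul_orbitThickening {ι : Type*}
    (hinv : ∀ (g : G) (y y' : Z), del (g • y) (g • y') = del y y')
    {W : Set G} {gs : ι → G} (hcov : ∀ x : G, ∃ i, ∃ w ∈ W, x = gs i * w) (z : Z) {η : ℝ}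
    (hη : 0 < η) :
    {y : Z | ∀ η > (0 : ℝ), ∃ g : G, del y (g • z) < η} ⊆
      ⋃ i, (fun y => gs i • y) '' orbitThickening del W z η := by
  intro y hy
  obtain ⟨g, hg⟩ := hy η hη
  obtain ⟨i, w, hw, rfl⟩ := hcov g
  exact mem_iUnion.2 ⟨i, _, inv_smul_mem_orbitThickening hinv hw hg, smul_inv_smul _ _⟩

theorem exists_not_isMeagre_image_smul_orbitThickening [TopologicalSpace Z] [BaireSpace Z]
    (hinv : ∀ (g : G) (y y' : Z), del (g • y) (g • y') = del y y') (z : Z)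
    (hcomeager : {y : Z | ∀ η > (0 : ℝ), ∃ g : G, del y (g • z) < η} ∈ residual Z)
    {W : Set G} {gs : ℕ → G} (hcov : ∀ x : G, ∃ n, ∃ w ∈ W, x = gs n * w) {η : ℝ}
    (hη : 0 < η) : ∃ n, ¬IsMeagre ((fun y => gs n • y) '' orbitThickening del W z η) :=
  have : Nonempty Z := ⟨z⟩
  exists_not_isMeagre_of_mem_residual_subset_iUnion hcomeager
    (setOf_approx_orbit_subset_iUnion_image_smul_orbitThickening hinv hcov z hη)

end OrbitThickening

theorem dense_fattening_and_nonmeager_translate_general {G : Type*} [Group G] [TopologicalSpace G]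
    [IsTopologicalGroup G] [PolishSpace G]
    {Z : Type*} [TopologicalSpace Z] [PolishSpace Z] [MulAction G Z]
    (hcont : Continuous fun p : G × Z => p.1 • p.2)
    (del : Z → Z → ℝ)
    (hinv : ∀ (g : G) (y y' : Z), del (g • y) (g • y') = del y y')
    (z : Z)
    (hcomeager : {y : Z | ∀ η > (0 : ℝ), ∃ g : G, del y (g • z) < η} ∈ residual Z) :
    ∀ U : Set G, U ∈ nhds (1 : G) → ∀ η > (0 : ℝ),
      (∃ V : Set Z, IsOpen V ∧ V.Nonempty ∧
          V ⊆ closure {y : Z | ∃ u ∈ U, del y (u • z) < η}) ∧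
      (∀ W : Set G, IsOpen W → W.Nonempty → (∀ w ∈ W, ∀ w' ∈ W, w⁻¹ * w' ∈ U) →
        ∀ gs : ℕ → G, (∀ x : G, ∃ n, ∃ w ∈ W, x = gs n * w) →
          ∃ n : ℕ, ¬ IsMeagre
            ((fun y => gs n • y) '' {y : Z | ∃ w ∈ W, del y (w • z) < η / 2})) := by
  have : ContinuousSMul G Z := ⟨hcont⟩
  intro U hU η hη
  refine ⟨?_, fun W _ _ _ gs hcov =>
    exists_not_isMeagre_image_smul_orbitThickening hinv z hcomeager hcov (half_pos hη)⟩
  obtain ⟨W, hWo, hW1, hWU⟩ := exists_isOpen_one_mem_inv_mul_mem hU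
  obtain ⟨gs, hcov⟩ := exists_seq_forall_eq_mul_mem hWo ⟨1, hW1⟩
  obtain ⟨n, hn⟩ :=
    exists_not_isMeagre_image_smul_orbitThickening hinv z hcomeager hcov (half_pos hη)
  have hW : ¬IsMeagre (orbitThickening del W z (η / 2)) :=
    mt (Homeomorph.smul (gs n)).isInducing.isMeagre_image hn
  obtain ⟨V, hVo, hVne, hV⟩ := exists_isOpen_nonempty_subset_closure_of_not_isMeagre hW
  have hWU' : W ⊆ U := fun w hw => by simpa using hWU 1 hW1 w hw
  exact ⟨V, hVo, hVne, hV.trans (closure_mono (orbitThickening_mono hWU' (half_le_self hη.le)))⟩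

/-- Let a Polish group `G` act continuously on a Polish space `Z`, let `∂` be a `G`-invariant
metric on `Z` refining its topology, and let `z ∈ Z` have dense orbit. If the `∂`-closure of
`G·z` is comeager in `Z`, then for every identity neighborhood `U ⊆ G` and `η > 0` there is
a nonempty open `V ⊆ Z` in which the fattening `(U·z)_η` is dense; consequently, for every
open `W` with `W⁻¹W ⊆ U` such that `G` is covered by countably many left translates of `W`,
some translate of `(W·z)_{η/2}` is non-meager. -/
theorem dense_fattening_and_nonmeager_translate {G : Type*} [Group G] [TopologicalSpace G]
    [IsTopologicalGroup G] [PolishSpace G]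
    {Z : Type*} [TopologicalSpace Z] [PolishSpace Z] [MulAction G Z]
    (hcont : Continuous fun p : G × Z => p.1 • p.2)
    (del : Z → Z → ℝ)
    (hsymm : ∀ y y' : Z, del y y' = del y' y)
    (htri : ∀ y y' y'' : Z, del y y'' ≤ del y y' + del y' y'')
    (hzero : ∀ y y' : Z, del y y' = 0 ↔ y = y')
    (hinv : ∀ (g : G) (y y' : Z), del (g • y) (g • y') = del y y')
    (hfine : ∀ O : Set Z, IsOpen O → ∀ y ∈ O, ∃ ε > (0 : ℝ), ∀ y', del y' y < ε → y' ∈ O)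
    (z : Z) (hdense : Dense {y : Z | ∃ g : G, g • z = y})
    (hcomeager : {y : Z | ∀ η > (0 : ℝ), ∃ g : G, del y (g • z) < η} ∈ residual Z) :
    ∀ U : Set G, U ∈ nhds (1 : G) → ∀ η > (0 : ℝ),
      (∃ V : Set Z, IsOpen V ∧ V.Nonempty ∧
          V ⊆ closure {y : Z | ∃ u ∈ U, del y (u • z) < η}) ∧
      (∀ W : Set G, IsOpen W → W.Nonempty → (∀ w ∈ W, ∀ w' ∈ W, w⁻¹ * w' ∈ U) →
        ∀ gs : ℕ → G, (∀ x : G, ∃ n, ∃ w ∈ W, x = gs n * w) →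
          ∃ n : ℕ, ¬ IsMeagre
            ((fun y => gs n • y) '' {y : Z | ∃ w ∈ W, del y (w • z) < η / 2})) :=
  dense_fattening_and_nonmeager_translate_general hcont del hinv z hcomeager
end

section
/- Let N be a countable atomless Boolean algebra equipped with a finitely additive probability measure μ taking exactly the values ℚ ∩ [0,1] and which is a good measure (for every a ∈ N and rational s ∈ [0, μ(a)] there is b ≤ a with μ(b) = s). Then any two such measured Boolean algebras are isomorphic via a measure-preserving Boolean isomorphism (uniqueness of the Fraïssé limit of finite rational-valued measure algebras), and moreover N is ultrahomogeneous: every measure-preserving isomorphism between finite subalgebras extends to a measure-preserving automorphism of N. -/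
/-- A countable atomless Boolean algebra with a strictly positive, finitely additive
probability measure taking exactly the rational values in `[0,1]` and which is a good
measure. This is (an axiomatization of) the Fraïssé limit of finite measured Boolean
algebras with rational-valued measures. -/
def IsGoodRationalMeasureAlgebra (N : Type*) [BooleanAlgebra N] (μ : N → ℝ) : Prop :=
  μ ⊥ = 0 ∧ μ ⊤ = 1 ∧
  (∀ a b : N, Disjoint a b → μ (a ⊔ b) = μ a + μ b) ∧
  (∀ a : N, a ≠ ⊥ → 0 < μ a) ∧
  (∀ a : N, ¬ IsAtom a) ∧
  (∀ a : N, ∃ q : ℚ, μ a = (q : ℝ)) ∧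
  (∀ q : ℚ, 0 ≤ (q : ℝ) → (q : ℝ) ≤ 1 → ∃ a : N, μ a = (q : ℝ)) ∧
  (∀ a : N, ∀ q : ℚ, 0 ≤ (q : ℝ) → (q : ℝ) ≤ μ a → ∃ b : N, b ≤ a ∧ μ b = (q : ℝ))

/-!
A measure-preserving isomorphism between finite subalgebras of `N` and `N'` is a finite partition
of `⊤` in `N × N'` into pairs `(a, b)` with `μ a = μ' b`, and refining the partition does not
change the isomorphism (strict positivity kills the null blocks). Goodness lets one refine it
until any given `x` is a union of blocks: split each block `(a, b)` into `(a ⊓ x, c)` and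
`(a ⊓ xᶜ, b ⊓ cᶜ)` for some `c ≤ b` of the rational measure `μ (a ⊓ x)`. Doing this alternately
for enumerations of `N` and of `N'` (the Rasiowa–Sikorski sequence for these cofinal families of
refinements) yields a directed family whose union is a measure-preserving isomorphism `N ≃o N'`
extending the partition we started from. Starting from the trivial partition gives uniqueness;
starting from the atoms of a finite subalgebra `S` matched by `f` gives ultrahomogeneity.
-/

open Finset

theorem map_finset_sup_of_supClosed {α β ι : Type*} [SemilatticeSup α] [OrderBot α]
    [SemilatticeSup β] [OrderBot β] {S : Set α} (hS : SupClosed S) (hbot : ⊥ ∈ S) {f : α → β}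
    (hf : ∀ a ∈ S, ∀ b ∈ S, f (a ⊔ b) = f a ⊔ f b) (hf0 : f ⊥ = ⊥) {s : Finset ι} {g : ι → α}
    (hg : ∀ i ∈ s, g i ∈ S) : f (s.sup g) = s.sup (f ∘ g) := by
  classical
  induction s using Finset.induction_on with
  | empty => simpa using hf0
  | insert i s hi ih =>
    have hs : ∀ j ∈ s, g j ∈ S := fun j hj => hg j (mem_insert_of_mem hj)
    rw [sup_insert, sup_insert, hf _ (hg i (mem_insert_self i s)) _ (sup_induction hbot hS hs),
      ih hs, Function.comp_apply]

theorem Finset.inf_sup_eq_of_pairwiseDisjoint {ι α : Type*} [DistribLattice α] [OrderBot α]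
    {s : Finset ι} {g c : ι → α} (hs : (s : Set ι).PairwiseDisjoint g) (hc : ∀ i ∈ s, c i ≤ g i)
    {j : ι} (hj : j ∈ s) : g j ⊓ s.sup c = c j := by
  rw [Finset.sup_inf_distrib_left]
  refine le_antisymm (Finset.sup_le fun i hi => ?_) (le_sup_of_le hj (le_inf (hc j hj) le_rfl))
  rcases eq_or_ne i j with rfl | hij
  · exact inf_le_right
  · exact ((hs hj hi hij.symm).mono_right (hc i hi)).eq_bot.le.trans bot_le

namespace Finpartition

variable {α : Type*} [BooleanAlgebra α] [DecidableEq α]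

noncomputable def ofCompl (a : α) : Finpartition (⊤ : α) :=
  ofErase {a, aᶜ}
    (supIndep_iff_pairwiseDisjoint.2 <| by
      rw [coe_pair]; exact Set.pairwise_pair_of_symm.2 fun _ => disjoint_compl_right)
    (by simp)

theorem exists_eq_of_mem_inf_ofCompl {P : Finpartition (⊤ : α)} {a b : α}
    (hb : b ∈ (P ⊓ ofCompl a).parts) : ∃ p ∈ P.parts, b = p ⊓ a ∨ b = p ⊓ aᶜ := by
  simp only [parts_inf, ofCompl, ofErase_parts, mem_erase, mem_image, mem_product,
    mem_insert, mem_singleton] at hb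
  obtain ⟨-, ⟨p, r⟩, ⟨hp, -, rfl | rfl⟩, rfl⟩ := hb
  exacts [⟨p, hp, .inl rfl⟩, ⟨p, hp, .inr rfl⟩]

end Finpartition

namespace IsGoodRationalMeasureAlgebra

variable {N N' : Type*} [BooleanAlgebra N] [BooleanAlgebra N'] {μ : N → ℝ} {μ' : N' → ℝ}
  {a b : N}

section
variable (hN : IsGoodRationalMeasureAlgebra N μ)
include hN

theorem measure_bot : μ ⊥ = 0 := hN.1

theorem measure_top : μ ⊤ = 1 := hN.2.1

theorem measure_sup (h : Disjoint a b) : μ (a ⊔ b) = μ a + μ b := hN.2.2.1 a b h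

theorem eq_bot_of_measure_eq_zero (h : μ a = 0) : a = ⊥ :=
  not_not.1 fun ha => (hN.2.2.2.1 a ha).ne' h

theorem measure_nonneg (a : N) : 0 ≤ μ a := by
  rcases eq_or_ne a ⊥ with rfl | ha
  · exact hN.measure_bot.ge
  · exact (hN.2.2.2.1 a ha).le

theorem measure_inf_add_inf_compl (a b : N) : μ (a ⊓ b) + μ (a ⊓ bᶜ) = μ a := by
  rw [← hN.measure_sup (disjoint_compl_right.mono inf_le_right inf_le_right), sup_inf_inf_compl]

theorem measure_mono (h : a ≤ b) : μ a ≤ μ b := by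
  rw [← hN.measure_inf_add_inf_compl b a, inf_eq_right.2 h]
  linarith [hN.measure_nonneg (b ⊓ aᶜ)]

theorem eq_of_le_of_measure_le (h : a ≤ b) (hμ : μ b ≤ μ a) : a = b := by
  have hsplit := hN.measure_inf_add_inf_compl b a
  rw [inf_eq_right.2 h] at hsplit
  have hzero : μ (b ⊓ aᶜ) = 0 := by linarith [hN.measure_nonneg (b ⊓ aᶜ)]
  refine h.antisymm ?_
  rw [← sdiff_eq_bot_iff, sdiff_eq]
  exact hN.eq_bot_of_measure_eq_zero hzero

theorem measure_finset_sup {ι : Type*} {s : Finset ι} {f : ι → N}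
    (hs : (s : Set ι).PairwiseDisjoint f) : μ (s.sup f) = ∑ i ∈ s, μ (f i) := by
  classical
  induction s using Finset.induction_on with
  | empty => simpa using hN.measure_bot
  | insert i s hi ih =>
    rw [coe_insert, Set.pairwiseDisjoint_insert_of_notMem (mem_coe.not.2 hi)] at hs
    rw [sup_insert, sum_insert hi,
      hN.measure_sup (Finset.disjoint_sup_right.2 fun j hj => hs.2 j hj), ih hs.1]

end

theorem exists_le_measure_eq (hN : IsGoodRationalMeasureAlgebra N μ)
    (hN' : IsGoodRationalMeasureAlgebra N' μ') {a : N} {b : N'} (h : μ a ≤ μ' b) :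
    ∃ c ≤ b, μ' c = μ a := by
  obtain ⟨q, hq⟩ := hN.2.2.2.2.2.1 a
  obtain ⟨c, hcb, hc⟩ := hN'.2.2.2.2.2.2.2 b q (hq ▸ hN.measure_nonneg a) (hq ▸ h)
  exact ⟨c, hcb, hc.trans hq.symm⟩

end IsGoodRationalMeasureAlgebra

section

open scoped Classical

variable {N N' : Type*} [BooleanAlgebra N] [BooleanAlgebra N'] {μ : N → ℝ} {μ' : N' → ℝ}

/-- A measure-preserving isomorphism between finite subalgebras of `N` and `N'`, encoded by its
matched atoms: the parts `(a, b)` of a partition of `⊤` in `N × N'`, with `μ a = μ' b`. In the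
refinement order of `Finpartition`, finer partitions (larger subalgebras) are smaller. -/
abbrev MatchedPartition (μ : N → ℝ) (μ' : N' → ℝ) : Type _ :=
  {P : Finpartition (⊤ : N × N') // ∀ p ∈ P.parts, μ p.1 = μ' p.2}

namespace MatchedPartition

variable {P Q : MatchedPartition μ μ'} {x y : N}

def InDomain (P : MatchedPartition μ μ') (x : N) : Prop :=
  ∀ p ∈ P.1.parts, p.1 ≤ x ∨ Disjoint p.1 x

noncomputable def map (P : MatchedPartition μ μ') (x : N) : N' :=
  {p ∈ P.1.parts | p.1 ≤ x}.sup Prod.snd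

noncomputable def symm (P : MatchedPartition μ μ') : MatchedPartition μ' μ :=
  ⟨(P.1.map OrderIso.prodComm).copy (map_top _), fun q hq => by
    obtain ⟨p, hp, rfl⟩ := Finset.mem_map.1 hq
    exact (P.2 p hp).symm⟩

noncomputable def top (h : μ ⊤ = μ' ⊤) : MatchedPartition μ μ' :=
  ⟨⊤, fun p hp => by rw [Finset.mem_singleton.1 (Finpartition.parts_top_subset _ hp)]; exact h⟩

theorem pairwiseDisjoint_fst (P : MatchedPartition μ μ') :
    (P.1.parts : Set (N × N')).PairwiseDisjoint Prod.fst :=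
  P.1.pairwiseDisjoint_apply (fun _ _ => rfl) rfl

theorem pairwiseDisjoint_snd (P : MatchedPartition μ μ') :
    (P.1.parts : Set (N × N')).PairwiseDisjoint Prod.snd :=
  P.1.pairwiseDisjoint_apply (fun _ _ => rfl) rfl

theorem mem_symm_parts {q : N' × N} : q ∈ P.symm.1.parts ↔ q.swap ∈ P.1.parts := by
  rw [symm, Finpartition.copy_parts, Finpartition.parts_map, Finset.mem_map_equiv]
  rfl

theorem symm_symm (P : MatchedPartition μ μ') : P.symm.symm = P :=
  Subtype.ext <| Finpartition.ext <| Finset.ext fun p => by simp [mem_symm_parts]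

theorem symm_le_symm (h : P ≤ Q) : P.symm ≤ Q.symm := fun q hq => by
  obtain ⟨p, hp, hqp⟩ := h (mem_symm_parts.1 hq)
  exact ⟨p.swap, mem_symm_parts.2 hp, hqp.2, hqp.1⟩

theorem sup_filter_fst (hx : P.InDomain x) : {p ∈ P.1.parts | p.1 ≤ x}.sup Prod.fst = x := by
  refine le_antisymm (Finset.sup_le fun p hp => (mem_filter.1 hp).2) ?_
  calc x = x ⊓ P.1.parts.sup Prod.fst := by
        rw [P.1.sup_parts_apply (fun _ _ => rfl) rfl, Prod.fst_top, inf_top_eq]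
    _ = P.1.parts.sup (x ⊓ ·.1) := Finset.sup_inf_distrib_left _ _ _
    _ ≤ _ := Finset.sup_le fun p hp => (hx p hp).elim
        (fun hpx => inf_le_right.trans (le_sup (mem_filter.2 ⟨hp, hpx⟩)))
        (fun hpx => hpx.symm.eq_bot.le.trans bot_le)

theorem map_mono (P : MatchedPartition μ μ') (h : x ≤ y) : P.map x ≤ P.map y :=
  Finset.sup_mono (Finset.monotone_filter_right _ fun _ _ hp => hp.trans h)

theorem inDomain_symm_iff {y : N'} :
    P.symm.InDomain y ↔ ∀ p ∈ P.1.parts, p.2 ≤ y ∨ Disjoint p.2 y :=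
  ⟨fun h p hp => h p.swap (mem_symm_parts.2 hp), fun h q hq => h q.swap (mem_symm_parts.1 hq)⟩

theorem symm_map_eq (y : N') : P.symm.map y = {p ∈ P.1.parts | p.2 ≤ y}.sup Prod.fst := by
  rw [map, symm, Finpartition.copy_parts, Finpartition.parts_map, Finset.filter_map,
    Finset.sup_map]
  rfl

theorem symm_inDomain_map (P : MatchedPartition μ μ') (x : N) : P.symm.InDomain (P.map x) := by
  refine inDomain_symm_iff.2 fun p hp => ?_
  by_cases hpx : p.1 ≤ x
  · exact .inl (le_sup (mem_filter.2 ⟨hp, hpx⟩))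
  · refine .inr (Finset.disjoint_sup_right.2 fun q hq =>
      P.pairwiseDisjoint_snd hp (mem_filter.1 hq).1 ?_)
    rintro rfl
    exact hpx (mem_filter.1 hq).2

theorem le_symm_map_map (hx : P.InDomain x) : x ≤ P.symm.map (P.map x) := by
  conv_lhs => rw [← sup_filter_fst hx]
  rw [symm_map_eq]
  exact Finset.sup_mono (Finset.monotone_filter_right _ fun p hp hpx =>
    le_sup (f := Prod.snd) (mem_filter.2 ⟨hp, hpx⟩))

theorem measure_map (hN : IsGoodRationalMeasureAlgebra N μ)
    (hN' : IsGoodRationalMeasureAlgebra N' μ') (hx : P.InDomain x) : μ' (P.map x) = μ x := by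
  have hsub : (({p ∈ P.1.parts | p.1 ≤ x} : Finset _) : Set (N × N')) ⊆ P.1.parts :=
    coe_subset.2 (filter_subset _ _)
  calc μ' (P.map x) = ∑ p ∈ P.1.parts with p.1 ≤ x, μ' p.2 :=
        hN'.measure_finset_sup (P.pairwiseDisjoint_snd.subset hsub)
    _ = ∑ p ∈ P.1.parts with p.1 ≤ x, μ p.1 :=
        sum_congr rfl fun p hp => (P.2 p (mem_filter.1 hp).1).symm
    _ = μ x := by
        rw [← hN.measure_finset_sup (P.pairwiseDisjoint_fst.subset hsub), sup_filter_fst hx]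

theorem symm_map_map (hN : IsGoodRationalMeasureAlgebra N μ)
    (hN' : IsGoodRationalMeasureAlgebra N' μ') (hx : P.InDomain x) :
    P.symm.map (P.map x) = x :=
  (hN.eq_of_le_of_measure_le (le_symm_map_map hx)
    (by rw [P.symm.measure_map hN' hN (P.symm_inDomain_map x), P.measure_map hN hN' hx])).symm

theorem inDomain_symm_map (P : MatchedPartition μ μ') (y : N') : P.InDomain (P.symm.map y) := by
  simpa only [symm_symm] using P.symm.symm_inDomain_map y

theorem map_symm_map (hN : IsGoodRationalMeasureAlgebra N μ)
    (hN' : IsGoodRationalMeasureAlgebra N' μ') {y : N'} (hy : P.symm.InDomain y) :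
    P.map (P.symm.map y) = y := by
  simpa only [symm_symm] using P.symm.symm_map_map hN' hN hy

theorem map_le_map_iff (hN : IsGoodRationalMeasureAlgebra N μ)
    (hN' : IsGoodRationalMeasureAlgebra N' μ') (hx : P.InDomain x) (hy : P.InDomain y) :
    P.map x ≤ P.map y ↔ x ≤ y := by
  refine ⟨fun h => ?_, P.map_mono⟩
  rw [← P.symm_map_map hN hN' hx, ← P.symm_map_map hN hN' hy]
  exact P.symm.map_mono h

theorem InDomain.of_le (hPQ : P ≤ Q) (hx : Q.InDomain x) : P.InDomain x := fun q hq => by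
  obtain ⟨p, hp, hqp⟩ := hPQ hq
  exact (hx p hp).imp hqp.1.trans fun hpx => hpx.mono_left hqp.1

theorem map_le_of_le (hN : IsGoodRationalMeasureAlgebra N μ)
    (hN' : IsGoodRationalMeasureAlgebra N' μ') (hPQ : P ≤ Q) (hx : Q.InDomain x) :
    P.map x ≤ Q.map x := Finset.sup_le fun q hq => by
  obtain ⟨hq, hqx⟩ := mem_filter.1 hq
  obtain ⟨p, hp, hqp⟩ := hPQ hq
  rcases hx p hp with hpx | hpx
  · exact hqp.2.trans (le_sup (f := Prod.snd) (mem_filter.2 ⟨hp, hpx⟩))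
  · have hq1 : q.1 = ⊥ := (hpx.mono_left hqp.1).eq_bot_of_le hqx
    have hq2 : q.2 = ⊥ := hN'.eq_bot_of_measure_eq_zero (by rw [← P.2 q hq, hq1, hN.measure_bot])
    exact hq2 ▸ bot_le

theorem map_eq_of_le (hN : IsGoodRationalMeasureAlgebra N μ)
    (hN' : IsGoodRationalMeasureAlgebra N' μ') (hPQ : P ≤ Q) (hx : Q.InDomain x) :
    P.map x = Q.map x :=
  hN'.eq_of_le_of_measure_le (map_le_of_le hN hN' hPQ hx)
    (by rw [Q.measure_map hN hN' hx, P.measure_map hN hN' (hx.of_le hPQ)])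

theorem exists_le_inDomain_of_measure_inf_eq (hN : IsGoodRationalMeasureAlgebra N μ)
    (hN' : IsGoodRationalMeasureAlgebra N' μ') (P : MatchedPartition μ μ') (x : N) (y : N')
    (h : ∀ p ∈ P.1.parts, μ (p.1 ⊓ x) = μ' (p.2 ⊓ y)) :
    ∃ Q ≤ P, Q.InDomain x ∧ ∀ q ∈ Q.1.parts, ∃ p ∈ P.1.parts,
      q = (p.1 ⊓ x, p.2 ⊓ y) ∨ q = (p.1 ⊓ xᶜ, p.2 ⊓ yᶜ) := by
  have hparts {q} (hq : q ∈ (P.1 ⊓ Finpartition.ofCompl (x, y)).parts) :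
      ∃ p ∈ P.1.parts, q = (p.1 ⊓ x, p.2 ⊓ y) ∨ q = (p.1 ⊓ xᶜ, p.2 ⊓ yᶜ) :=
    Finpartition.exists_eq_of_mem_inf_ofCompl hq
  refine ⟨⟨P.1 ⊓ Finpartition.ofCompl (x, y), fun q hq => ?_⟩, Subtype.mk_le_mk.2 inf_le_left,
    fun q hq => ?_, fun _ => hparts⟩
  · obtain ⟨p, hp, rfl | rfl⟩ := hparts hq
    · exact h p hp
    · have h1 := hN.measure_inf_add_inf_compl p.1 x
      have h2 := hN'.measure_inf_add_inf_compl p.2 y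
      linarith [h p hp, P.2 p hp]
  · obtain ⟨p, -, rfl | rfl⟩ := hparts hq
    exacts [.inl inf_le_right, .inr (disjoint_compl_left.mono_left inf_le_right)]

theorem exists_le_inDomain (hN : IsGoodRationalMeasureAlgebra N μ)
    (hN' : IsGoodRationalMeasureAlgebra N' μ') (P : MatchedPartition μ μ') (x : N) :
    ∃ Q ≤ P, Q.InDomain x := by
  have hc : ∀ p ∈ P.1.parts, ∃ c ≤ p.2, μ' c = μ (p.1 ⊓ x) := fun p hp =>
    hN.exists_le_measure_eq hN' ((hN.measure_mono inf_le_left).trans (P.2 p hp).le)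
  choose! c hc hcμ using hc
  obtain ⟨Q, hQ, hx, -⟩ := P.exists_le_inDomain_of_measure_inf_eq hN hN' x (P.1.parts.sup c)
    fun p hp => by rw [Finset.inf_sup_eq_of_pairwiseDisjoint P.pairwiseDisjoint_snd hc hp, hcμ p hp]
  exact ⟨Q, hQ, hx⟩

theorem exists_le_symm_inDomain (hN : IsGoodRationalMeasureAlgebra N μ)
    (hN' : IsGoodRationalMeasureAlgebra N' μ') (P : MatchedPartition μ μ') (y : N') :
    ∃ Q ≤ P, Q.symm.InDomain y := by
  obtain ⟨R, hR, hy⟩ := P.symm.exists_le_inDomain hN' hN y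
  exact ⟨R.symm, P.symm_symm ▸ symm_le_symm hR, R.symm_symm.symm ▸ hy⟩

theorem exists_orderIso_of_directed (hN : IsGoodRationalMeasureAlgebra N μ)
    (hN' : IsGoodRationalMeasureAlgebra N' μ') {ι : Type*} (Q : ι → MatchedPartition μ μ')
    (hQ : Directed (· ≥ ·) Q) (hdom : ∀ x, ∃ i, (Q i).InDomain x)
    (hcodom : ∀ y, ∃ i, (Q i).symm.InDomain y) :
    ∃ e : N ≃o N', (∀ a, μ' (e a) = μ a) ∧ ∀ i a, (Q i).InDomain a → e a = (Q i).map a := by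
  choose idx hidx using hdom
  let E (a : N) : N' := (Q (idx a)).map a
  have hmap : ∀ i a, (Q i).InDomain a → (Q i).map a = E a := fun i a ha => by
    obtain ⟨k, hki, hka⟩ := hQ i (idx a)
    exact (map_eq_of_le hN hN' hki ha).symm.trans (map_eq_of_le hN hN' hka (hidx a))
  have hE : ∀ a b, E a ≤ E b ↔ a ≤ b := fun a b => by
    obtain ⟨k, hka, hkb⟩ := hQ (idx a) (idx b)
    have ha := (hidx a).of_le hka
    have hb := (hidx b).of_le hkb
    rw [← hmap k a ha, ← hmap k b hb]
    exact map_le_map_iff hN hN' ha hb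
  have hsurj : Function.Surjective E := fun y => by
    obtain ⟨i, hi⟩ := hcodom y
    refine ⟨(Q i).symm.map y, ?_⟩
    rw [← hmap i _ ((Q i).inDomain_symm_map y), map_symm_map hN hN' hi]
  exact ⟨.ofSurjective (.ofMapLEIff E hE) hsurj, fun a => measure_map hN hN' (hidx a),
    fun i a ha => (hmap i a ha).symm⟩

theorem exists_orderIso_extending [Countable N] [Countable N']
    (hN : IsGoodRationalMeasureAlgebra N μ) (hN' : IsGoodRationalMeasureAlgebra N' μ')
    (P : MatchedPartition μ μ') :
    ∃ e : N ≃o N', (∀ a, μ' (e a) = μ a) ∧ ∀ a, P.InDomain a → e a = P.map a := by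
  have := Encodable.ofCountable N
  have := Encodable.ofCountable N'
  let D : N ⊕ N' → Order.Cofinal (MatchedPartition μ μ')ᵒᵈ :=
    Sum.elim (fun x => ⟨{R | R.ofDual.InDomain x}, fun R => by
        obtain ⟨Q, hQ, hx⟩ := R.ofDual.exists_le_inDomain hN hN' x
        exact ⟨OrderDual.toDual Q, hx, hQ⟩⟩)
      (fun y => ⟨{R | R.ofDual.symm.InDomain y}, fun R => by
        obtain ⟨Q, hQ, hy⟩ := R.ofDual.exists_le_symm_inDomain hN hN' y
        exact ⟨OrderDual.toDual Q, hy, hQ⟩⟩)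
  let Q (n : ℕ) : MatchedPartition μ μ' := (Order.sequenceOfCofinals (.toDual P) D n).ofDual
  obtain ⟨e, he, heQ⟩ := exists_orderIso_of_directed hN hN' Q
    (Order.sequenceOfCofinals.monotone _ D).dual_right.directed_ge
    (fun x => ⟨_, Order.sequenceOfCofinals.encode_mem _ D (.inl x)⟩)
    (fun y => ⟨_, Order.sequenceOfCofinals.encode_mem _ D (.inr y)⟩)
  exact ⟨e, he, heQ 0⟩

section Graph

variable {S : Set N} {f : N → N'}

theorem map_eq_of_parts_subset_graph (hS : SupClosed S) (hbot : ⊥ ∈ S)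
    (hf : ∀ a ∈ S, ∀ b ∈ S, f (a ⊔ b) = f a ⊔ f b) (hf0 : f ⊥ = ⊥)
    (hP : ∀ p ∈ P.1.parts, p.1 ∈ S ∧ p.2 = f p.1) (hx : P.InDomain x) : P.map x = f x := by
  conv_rhs => rw [← sup_filter_fst hx]
  rw [map_finset_sup_of_supClosed hS hbot hf hf0 fun p hp => (hP p (mem_filter.1 hp).1).1]
  exact Finset.sup_congr rfl fun p hp => (hP p (mem_filter.1 hp).1).2

theorem exists_parts_subset_graph (hN : IsGoodRationalMeasureAlgebra N μ)
    (hN' : IsGoodRationalMeasureAlgebra N' μ') (htop : ⊤ ∈ S) (hS : InfClosed S)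
    (hcompl : ∀ a ∈ S, aᶜ ∈ S) (hf : ∀ a ∈ S, ∀ b ∈ S, f (a ⊓ b) = f a ⊓ f b)
    (hfcompl : ∀ a ∈ S, f aᶜ = (f a)ᶜ) (hftop : f ⊤ = ⊤) (hfμ : ∀ a ∈ S, μ' (f a) = μ a)
    (T : Finset N) (hT : ↑T ⊆ S) :
    ∃ P : MatchedPartition μ μ', (∀ p ∈ P.1.parts, p.1 ∈ S ∧ p.2 = f p.1) ∧
      ∀ x ∈ T, P.InDomain x := by
  induction T using Finset.induction_on with
  | empty =>
    refine ⟨top (hftop ▸ hfμ ⊤ htop).symm, fun p hp => ?_, by simp⟩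
    rw [Finset.mem_singleton.1 (Finpartition.parts_top_subset _ hp)]
    exact ⟨htop, hftop.symm⟩
  | insert x T hx ih =>
    have hxS := hT (mem_insert_self x T)
    obtain ⟨P, hPf, hPT⟩ := ih ((coe_subset.2 (subset_insert x T)).trans hT)
    obtain ⟨Q, hQP, hQx, hQ⟩ := P.exists_le_inDomain_of_measure_inf_eq hN hN' x (f x)
      fun p hp => by rw [(hPf p hp).2, ← hf _ (hPf p hp).1 _ hxS, hfμ _ (hS (hPf p hp).1 hxS)]
    refine ⟨Q, fun q hq => ?_, ?_⟩
    · obtain ⟨p, hp, rfl | rfl⟩ := hQ q hq <;> obtain ⟨hpS, hpf⟩ := hPf p hp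
      · exact ⟨hS hpS hxS, by rw [hpf, hf _ hpS _ hxS]⟩
      · exact ⟨hS hpS (hcompl x hxS), by rw [hpf, hf _ hpS _ (hcompl x hxS), hfcompl x hxS]⟩
    · simp only [mem_insert, forall_eq_or_imp]
      exact ⟨hQx, fun a ha => (hPT a ha).of_le hQP⟩

end Graph

end MatchedPartition

end

/-- Uniqueness and ultrahomogeneity of the countable atomless good rational-valued measured
Boolean algebra: any two such algebras are isomorphic by a measure-preserving Boolean
isomorphism, and any measure-preserving isomorphism between finite subalgebras extends to a
measure-preserving automorphism. -/
theorem goodRationalMeasureAlgebra_unique_and_ultrahomogeneous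
    {N N' : Type*} [BooleanAlgebra N] [BooleanAlgebra N'] [Countable N] [Countable N']
    (μ : N → ℝ) (μ' : N' → ℝ)
    (hN : IsGoodRationalMeasureAlgebra N μ) (hN' : IsGoodRationalMeasureAlgebra N' μ') :
    (∃ e : N ≃o N', ∀ a : N, μ' (e a) = μ a) ∧
    (∀ S : Set N, S.Finite → ⊥ ∈ S → ⊤ ∈ S →
      (∀ a ∈ S, ∀ b ∈ S, a ⊔ b ∈ S) → (∀ a ∈ S, ∀ b ∈ S, a ⊓ b ∈ S) → (∀ a ∈ S, aᶜ ∈ S) →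
      ∀ f : N → N,
        (∀ a ∈ S, ∀ b ∈ S, f (a ⊔ b) = f a ⊔ f b) →
        (∀ a ∈ S, ∀ b ∈ S, f (a ⊓ b) = f a ⊓ f b) →
        (∀ a ∈ S, f aᶜ = (f a)ᶜ) → f ⊥ = ⊥ → f ⊤ = ⊤ →
        (∀ a ∈ S, μ (f a) = μ a) →
        ∃ e : N ≃o N, (∀ a : N, μ (e a) = μ a) ∧ ∀ a ∈ S, e a = f a) := by
  refine ⟨?_, fun S hS hbot htop hsup hinf hcompl f fsup finf fcompl fbot ftop fmeas => ?_⟩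
  · obtain ⟨e, he, -⟩ := MatchedPartition.exists_orderIso_extending hN hN'
      (MatchedPartition.top (hN.measure_top.trans hN'.measure_top.symm))
    exact ⟨e, he⟩
  · obtain ⟨P, hPf, hPS⟩ := MatchedPartition.exists_parts_subset_graph hN hN htop
      (fun a ha b hb => hinf a ha b hb) hcompl finf fcompl ftop fmeas hS.toFinset (by simp)
    obtain ⟨e, he, heP⟩ := MatchedPartition.exists_orderIso_extending hN hN P
    refine ⟨e, he, fun a ha => ?_⟩
    have haP := hPS a (hS.mem_toFinset.2 ha)
    rw [heP a haP, P.map_eq_of_parts_subset_graph (fun a ha b hb => hsup a ha b hb) hbot fsup fbot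
      hPf haP]
end

section
/- Let B be a finite measured Boolean algebra all of whose atoms have rational measure, and let f₁,…,f_k be partial measure-preserving isomorphisms between subalgebras of B. Then there exists a finite measured Boolean algebra B' ⊇ B, all of whose atoms have equal measure, and automorphisms g₁,…,g_k of B' with g_i extending f_i for each i (the Hrushovski extension property for finite rational measure algebras). -/
/-- A subset of a Boolean algebra that is a (finite) subalgebra. -/
def IsBoolSubalgebra {B : Type*} [BooleanAlgebra B] (S : Set B) : Prop :=
  ⊥ ∈ S ∧ ⊤ ∈ S ∧ (∀ a ∈ S, ∀ b ∈ S, a ⊔ b ∈ S) ∧ (∀ a ∈ S, ∀ b ∈ S, a ⊓ b ∈ S) ∧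
    ∀ a ∈ S, aᶜ ∈ S

/-!
Clearing denominators gives each atom `a` an integer weight `d * μ a`. Cutting `Fin d` into blocks
of these sizes labelled by the atoms, and sending `b` to the union of the blocks of the atoms
below it, embeds `B` into the powerset of `Fin d` with `μ b = #(ι b) / d`.

A partial isomorphism `f` with domain `S` now yields two Boolean homomorphisms `ι` and `ι ∘ f`
from `S` into `Finset (Fin d)` with the same cardinalities. Each cell
`{x | ∀ a, x ∈ φ a ↔ p a}` of the Venn diagram of a Boolean homomorphism `φ` is the image of the
minterm of `S` with sign pattern `p`, so the two Venn diagrams have cells of equal sizes, and a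
permutation matching them cell by cell extends `f`.
-/

open Finset

theorem Finset.exists_perm_image_eq_of_card_cells {X J : Type*} [Finite X] [DecidableEq X]
    (s t : J → Finset X)
    (h : ∀ p : J → Prop, Nat.card {x // ∀ j, x ∈ s j ↔ p j} = Nat.card {x // ∀ j, x ∈ t j ↔ p j}) :
    ∃ σ : Equiv.Perm X, ∀ j, (s j).image σ = t j := by
  have cell_equiv (u : J → Finset X) (p : J → Prop) :
      {x // (fun j => x ∈ u j) = p} ≃ {x // ∀ j, x ∈ u j ↔ p j} :=
    Equiv.subtypeEquivRight fun x => by simp only [funext_iff, eq_iff_iff]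
  have e (p : J → Prop) : {x // (fun j => x ∈ s j) = p} ≃ {x // (fun j => x ∈ t j) = p} :=
    (cell_equiv s p).trans <| (Finite.card_eq.mp (h p)).some.trans (cell_equiv t p).symm
  let σ : Equiv.Perm X := Equiv.ofFiberEquiv e
  have hσ (x : X) (j : J) : σ x ∈ t j ↔ x ∈ s j := by
    rw [← eq_iff_iff]; exact congrFun (Equiv.ofFiberEquiv_map e x) j
  refine ⟨σ, fun j => Finset.ext fun y => ?_⟩
  rw [Finset.mem_image]
  constructor
  · rintro ⟨x, hx, rfl⟩
    exact (hσ x j).mpr hx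
  · intro hy
    exact ⟨σ.symm y, (hσ _ j).mp (by simpa using hy), σ.apply_symm_apply y⟩

section Minterm

variable {A J X : Type*} [BooleanAlgebra A] [Fintype J] [Fintype X] [DecidableEq X]

open scoped Classical in
noncomputable def minterm (b : J → A) (p : J → Prop) : A :=
  univ.inf fun j => if p j then b j else (b j)ᶜ

theorem BoundedLatticeHom.mem_map_minterm (φ : BoundedLatticeHom A (Finset X)) (b : J → A)
    (p : J → Prop) (x : X) : x ∈ φ (minterm b p) ↔ ∀ j, (x ∈ φ (b j) ↔ p j) := by
  classical
  rw [minterm, map_finset_inf, Finset.mem_inf]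
  refine forall_congr' fun j => ?_
  by_cases hp : p j <;> simp [hp]

end Minterm

theorem BoundedLatticeHom.exists_perm_image_eq_of_card_eq {A X : Type*} [BooleanAlgebra A]
    [Finite A] [Fintype X] [DecidableEq X] (φ ψ : BoundedLatticeHom A (Finset X))
    (h : ∀ a, #(φ a) = #(ψ a)) : ∃ σ : Equiv.Perm X, ∀ a, (φ a).image σ = ψ a := by
  have := Fintype.ofFinite A
  have card_cell (χ : BoundedLatticeHom A (Finset X)) (p : A → Prop) :
      Nat.card {x // ∀ a, x ∈ χ a ↔ p a} = #(χ (minterm id p)) := by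
    rw [← Nat.card_eq_finsetCard]
    exact Nat.card_congr <| Equiv.subtypeEquivRight fun x => (χ.mem_map_minterm id p x).symm
  exact Finset.exists_perm_image_eq_of_card_cells _ _ fun p => by
    rw [card_cell, card_cell, h]

namespace IsBoolSubalgebra

variable {B : Type*} [BooleanAlgebra B] {S : Set B}

def toBooleanSubalgebra (hS : IsBoolSubalgebra S) : BooleanSubalgebra B where
  carrier := S
  supClosed' _ ha _ hb := hS.2.2.1 _ ha _ hb
  infClosed' _ ha _ hb := hS.2.2.2.1 _ ha _ hb
  compl_mem' ha := hS.2.2.2.2 _ ha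
  bot_mem' := hS.1

variable {f : B → B}

theorem map_bot_of_map_inf_compl (hS : IsBoolSubalgebra S)
    (hinf : ∀ a ∈ S, ∀ b ∈ S, f (a ⊓ b) = f a ⊓ f b) (hcompl : ∀ a ∈ S, f aᶜ = (f a)ᶜ) :
    f ⊥ = ⊥ := by
  have h := hinf ⊥ hS.1 ⊥ᶜ (hS.2.2.2.2 ⊥ hS.1)
  rwa [hcompl ⊥ hS.1, inf_compl_eq_bot, inf_compl_eq_bot] at h

def homOfMapOn (hS : IsBoolSubalgebra S) (hsup : ∀ a ∈ S, ∀ b ∈ S, f (a ⊔ b) = f a ⊔ f b)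
    (hinf : ∀ a ∈ S, ∀ b ∈ S, f (a ⊓ b) = f a ⊓ f b) (hcompl : ∀ a ∈ S, f aᶜ = (f a)ᶜ) :
    BoundedLatticeHom hS.toBooleanSubalgebra B where
  toFun a := f a
  map_sup' a b := hsup a a.2 b b.2
  map_inf' a b := hinf a a.2 b b.2
  map_bot' := map_bot_of_map_inf_compl hS hinf hcompl
  map_top' := by
    change f ⊤ = ⊤
    rw [← compl_bot, hcompl ⊥ hS.1, map_bot_of_map_inf_compl hS hinf hcompl]

end IsBoolSubalgebra

theorem IsAtom.le_sup_iff {L : Type*} [DistribLattice L] [OrderBot L] {a b c : L}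
    (ha : IsAtom a) : a ≤ b ⊔ c ↔ a ≤ b ∨ a ≤ c := by
  refine ⟨fun h => ?_, fun h => h.elim (le_sup_of_le_left ·) (le_sup_of_le_right ·)⟩
  by_contra! hbc
  rw [ha.not_le_iff_disjoint, ha.not_le_iff_disjoint] at hbc
  exact (ha.not_le_iff_disjoint.mpr (disjoint_sup_right.mpr hbc)) h

section AtomPreimage

variable {B X : Type*} [BooleanAlgebra B] [Fintype X] [DecidableEq X]

open scoped Classical in
noncomputable def atomPreimage (g : X → {a : B // IsAtom a}) : BoundedLatticeHom B (Finset X) where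
  toFun b := {x | (g x : B) ≤ b}
  map_sup' b c := by ext x; simp [(g x).2.le_sup_iff]
  map_inf' b c := by ext x; simp
  map_top' := by ext x; simp
  map_bot' := by ext x; simp [(g x).2.ne_bot]

theorem card_atomPreimage_of_isAtom [DecidableEq B] (g : X → {a : B // IsAtom a}) {a : B}
    (ha : IsAtom a) :
    #(atomPreimage g a) = #{x | g x = ⟨a, ha⟩} := by
  congr 1
  ext x
  simp [atomPreimage, ha.le_iff_eq (g x).2.ne_bot, Subtype.ext_iff]

end AtomPreimage

section FinitelyAdditive

variable {B M : Type*} [BooleanAlgebra B] [AddZeroClass M]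

def IsFinitelyAdditive (μ : B → M) : Prop :=
  μ ⊥ = 0 ∧ ∀ a b, Disjoint a b → μ (a ⊔ b) = μ a + μ b

theorem IsFinitelyAdditive.eq_of_isAtom [Finite B] {μ ν : B → M} (hμ : IsFinitelyAdditive μ)
    (hν : IsFinitelyAdditive ν) (h : ∀ a, IsAtom a → μ a = ν a) : μ = ν := by
  funext b
  induction b using WellFoundedLT.induction with
  | ind b ih =>
    obtain rfl | ⟨a, ha, hab⟩ := eq_bot_or_exists_atom_le b
    · rw [hμ.1, hν.1]
    · have hsplit : b = a ⊔ b \ a := (sup_sdiff_cancel_right hab).symm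
      have hdisj : Disjoint a (b \ a) := disjoint_sdiff_self_right
      rw [hsplit, hμ.2 _ _ hdisj, hν.2 _ _ hdisj, h a ha, ih _ (sdiff_lt hab ha.ne_bot)]

end FinitelyAdditive

theorem BoundedLatticeHom.isFinitelyAdditive_card_div {B X : Type*} [BooleanAlgebra B]
    [Fintype X] [DecidableEq X] (φ : BoundedLatticeHom B (Finset X)) (d : ℝ) :
    IsFinitelyAdditive fun b => (#(φ b) : ℝ) / d := by
  refine ⟨by simp, fun a b hab => ?_⟩
  dsimp only
  rw [map_sup, Finset.sup_eq_union, card_union_of_disjoint (hab.map φ), Nat.cast_add, add_div]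

theorem BoundedLatticeHom.injective_of_map_eq_bot {A B : Type*} [BooleanAlgebra A]
    [BooleanAlgebra B] (φ : BoundedLatticeHom A B) (h : ∀ a, φ a = ⊥ → a = ⊥) :
    Function.Injective φ := by
  intro a b hab
  refine le_antisymm ?_ ?_ <;> rw [← sdiff_eq_bot_iff] <;> apply h <;>
    simp [hab]

theorem exists_fin_fiber_card {α : Type*} [Fintype α] [DecidableEq α] (N : α → ℕ) :
    ∃ g : Fin (∑ a, N a) → α, ∀ a, #{x | g x = a} = N a := by
  let e : (Σ a, Fin (N a)) ≃ Fin (∑ a, N a) := Fintype.equivFinOfCardEq (by simp)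
  refine ⟨fun x => (e.symm x).1, fun a => ?_⟩
  rw [← Fintype.card_subtype, ← Fintype.card_fin (N a)]
  exact Fintype.card_congr <| (e.symm.subtypeEquiv fun x => Iff.rfl).trans (Equiv.sigmaSubtype a)

theorem exists_nat_mul_eq_nat_of_rat {ι : Type*} [Finite ι] (x : ι → ℝ) (hx : ∀ i, ∃ q : ℚ, x i = q)
    (hnn : ∀ i, 0 ≤ x i) : ∃ d : ℕ, 0 < d ∧ ∃ N : ι → ℕ, ∀ i, (N i : ℝ) = d * x i := by
  have := Fintype.ofFinite ι
  choose q hq using hx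
  refine ⟨∏ i, (q i).den, Finset.prod_pos fun i _ => (q i).pos, ?_⟩
  have hnat (i : ι) : ∃ n : ℕ, (n : ℝ) = (∏ i, (q i).den : ℕ) * x i := by
    obtain ⟨c, hc⟩ := Finset.dvd_prod_of_mem (fun i => (q i).den) (mem_univ i)
    have hnum : 0 ≤ (q i).num := Rat.num_nonneg.mpr (by exact_mod_cast hq i ▸ hnn i)
    refine ⟨c * (q i).num.toNat, ?_⟩
    have hden : ((q i).den : ℝ) * q i = (q i).num := by exact_mod_cast Rat.den_mul_eq_num (q i)
    have hcast : ((q i).num.toNat : ℝ) = (q i).num := by exact_mod_cast Int.toNat_of_nonneg hnum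
    rw [hc, hq i, Nat.cast_mul, Nat.cast_mul, hcast, ← hden]
    ring
  choose N hN using hnat
  exact ⟨N, hN⟩

theorem IsFinitelyAdditive.exists_uniform_embedding {B : Type*} [BooleanAlgebra B] [Fintype B]
    {μ : B → ℝ} (hμ : IsFinitelyAdditive μ) (htop : μ ⊤ = 1) (hpos : ∀ a, a ≠ ⊥ → 0 < μ a)
    (hrat : ∀ a, IsAtom a → ∃ q : ℚ, μ a = q) :
    ∃ m : ℕ, 0 < m ∧ ∃ ι : BoundedLatticeHom B (Finset (Fin m)),
      Function.Injective ι ∧ ∀ b, μ b = #(ι b) / m := by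
  classical
  obtain ⟨d, hd, N, hN⟩ := exists_nat_mul_eq_nat_of_rat (fun a : {a : B // IsAtom a} => μ a)
    (fun a => hrat a a.2) (fun a => (hpos a a.2.ne_bot).le)
  obtain ⟨g, hg⟩ := exists_fin_fiber_card N
  have hμι : μ = fun b => (#(atomPreimage g b) : ℝ) / d :=
    hμ.eq_of_isAtom ((atomPreimage g).isFinitelyAdditive_card_div d) fun a ha => by
      rw [card_atomPreimage_of_isAtom g ha, hg, hN]
      field_simp
  have hm : ∑ a, N a = d := by
    have h := congrFun hμι ⊤
    rw [htop, map_top, Finset.top_eq_univ, Finset.card_univ, Fintype.card_fin,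
      eq_div_iff (by positivity), one_mul] at h
    exact_mod_cast h.symm
  refine ⟨_, hm ▸ hd, atomPreimage g, (atomPreimage g).injective_of_map_eq_bot fun b hb => ?_,
    fun b => by rw [congrFun hμι b, ← hm]⟩
  by_contra hne
  have h := hpos b hne
  simp [hμι, hb] at h

theorem hrushovski_property_finite_measure_algebras_general {B : Type*} [BooleanAlgebra B] [Fintype B]
    (μ : B → ℝ)
    (hbot : μ ⊥ = 0) (htop : μ ⊤ = 1)
    (hadd : ∀ a b : B, Disjoint a b → μ (a ⊔ b) = μ a + μ b)
    (hpos : ∀ a : B, a ≠ ⊥ → 0 < μ a)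
    (hrat : ∀ a : B, IsAtom a → ∃ q : ℚ, μ a = (q : ℝ))
    (k : ℕ) (S : Fin k → Set B) (f : Fin k → B → B)
    (hS : ∀ i, IsBoolSubalgebra (S i))
    (hfsup : ∀ i, ∀ a ∈ S i, ∀ b ∈ S i, f i (a ⊔ b) = f i a ⊔ f i b)
    (hfinf : ∀ i, ∀ a ∈ S i, ∀ b ∈ S i, f i (a ⊓ b) = f i a ⊓ f i b)
    (hfcompl : ∀ i, ∀ a ∈ S i, f i aᶜ = (f i a)ᶜ)
    (hfμ : ∀ i, ∀ a ∈ S i, μ (f i a) = μ a) :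
    ∃ (m : ℕ), 0 < m ∧ ∃ ι : B → Finset (Fin m),
      Function.Injective ι ∧ ι ⊥ = ∅ ∧ ι ⊤ = Finset.univ ∧
      (∀ a b : B, ι (a ⊔ b) = ι a ∪ ι b) ∧
      (∀ a b : B, ι (a ⊓ b) = ι a ∩ ι b) ∧
      (∀ a : B, ι aᶜ = (ι a)ᶜ) ∧
      (∀ a : B, μ a = ((ι a).card : ℝ) / (m : ℝ)) ∧
      ∃ σ : Fin k → Equiv.Perm (Fin m),
        ∀ i, ∀ a ∈ S i, Finset.image (σ i) (ι a) = ι (f i a) := by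
  obtain ⟨m, hm, ι, hι, hμι⟩ :=
    IsFinitelyAdditive.exists_uniform_embedding ⟨hbot, hadd⟩ htop hpos hrat
  have hperm (i : Fin k) : ∃ σ : Equiv.Perm (Fin m), ∀ a : (hS i).toBooleanSubalgebra,
      (ι a).image σ = ι (f i a) :=
    (ι.comp (hS i).toBooleanSubalgebra.subtype).exists_perm_image_eq_of_card_eq
      (ι.comp ((hS i).homOfMapOn (hfsup i) (hfinf i) (hfcompl i))) fun a => by
        have h := hfμ i a a.2
        rw [hμι, hμι, div_left_inj' (by positivity)] at h
        exact_mod_cast h.symm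
  choose σ hσ using hperm
  exact ⟨m, hm, ι, hι, map_bot ι, map_top ι, map_sup ι, map_inf ι, map_compl' ι, hμι,
    σ, fun i a ha => hσ i ⟨a, ha⟩⟩

/-- The Hrushovski extension property for finite rational-valued measure algebras:
any finite tuple of partial measure-preserving isomorphisms `f₁, …, f_k` between
subalgebras of a finite measured Boolean algebra `B` with rational atom measures extends to
a tuple of measure-preserving automorphisms of a larger finite measured Boolean algebra
`B'` all of whose atoms have equal measure `1/m` — concretely, `B'` can be realized as the
powerset algebra `Finset (Fin m)` with the uniform measure, the automorphisms being induced
by permutations of `Fin m`. -/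
theorem hrushovski_property_finite_measure_algebras {B : Type*} [BooleanAlgebra B] [Fintype B]
    (μ : B → ℝ)
    (hbot : μ ⊥ = 0) (htop : μ ⊤ = 1)
    (hadd : ∀ a b : B, Disjoint a b → μ (a ⊔ b) = μ a + μ b)
    (hpos : ∀ a : B, a ≠ ⊥ → 0 < μ a)
    (hrat : ∀ a : B, IsAtom a → ∃ q : ℚ, μ a = (q : ℝ))
    (k : ℕ) (S T : Fin k → Set B) (f : Fin k → B → B)
    (hS : ∀ i, IsBoolSubalgebra (S i)) (hT : ∀ i, IsBoolSubalgebra (T i))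
    (hbij : ∀ i, Set.BijOn (f i) (S i) (T i))
    (hfsup : ∀ i, ∀ a ∈ S i, ∀ b ∈ S i, f i (a ⊔ b) = f i a ⊔ f i b)
    (hfinf : ∀ i, ∀ a ∈ S i, ∀ b ∈ S i, f i (a ⊓ b) = f i a ⊓ f i b)
    (hfcompl : ∀ i, ∀ a ∈ S i, f i aᶜ = (f i a)ᶜ)
    (hfμ : ∀ i, ∀ a ∈ S i, μ (f i a) = μ a) :
    ∃ (m : ℕ), 0 < m ∧ ∃ ι : B → Finset (Fin m),
      Function.Injective ι ∧ ι ⊥ = ∅ ∧ ι ⊤ = Finset.univ ∧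
      (∀ a b : B, ι (a ⊔ b) = ι a ∪ ι b) ∧
      (∀ a b : B, ι (a ⊓ b) = ι a ∩ ι b) ∧
      (∀ a : B, ι aᶜ = (ι a)ᶜ) ∧
      (∀ a : B, μ a = ((ι a).card : ℝ) / (m : ℝ)) ∧
      ∃ σ : Fin k → Equiv.Perm (Fin m),
        ∀ i, ∀ a ∈ S i, Finset.image (σ i) (ι a) = ι (f i a) :=
  hrushovski_property_finite_measure_algebras_general μ hbot htop hadd hpos hrat k S f hS hfsup
    hfinf hfcompl hfμ
end

section
/- Let (X,μ) be a standard atomless probability space and let T ∈ Aut(X,μ) be aperiodic (μ{x : T^n x = x} = 0 for all n ≥ 1). Then for every ε > 0 and n ≥ 1 there exists a measurable set E such that E, TE, …, T^{n-1}E are pairwise disjoint and μ(X \ ⋃_{i<n} T^i E) < ε (Rokhlin's lemma), and consequently T lies in the uniform-metric closure of the set of periodic automorphisms: for every ε > 0 there is S ∈ Aut(X,μ) with S^n = id for some n and sup_{A} μ(TA △ SA) < ε. -/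
/-!
Aperiodicity and a countable separating family of measurable sets cover almost all of `X` by
countably many measurable sets that no point revisits within `N` steps. A greedy union of them
is a single such set `B` whose orbit saturation is conull, so by Poincaré recurrence almost
every point has visited `B` in the past, while `(N + 1) μ(B) ≤ 1`. In the Kakutani skyscraper
over `B` (level = time since the last visit), the points at a level divisible by `n` that do
not visit `B` within the next `n - 1` steps form a Rokhlin base `E`: its first `n` images are
disjoint and miss at most `n μ(B) < ε`.

For the approximation, let `S` move each of the levels `E, TE, …, T^{n-1}E` of a tower of
height `n + 1` up by `T`, send the top level `T^n E` back to `E` by `T^{-n}`, and fix all other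
points. Then `S^{n+1} = id`, and `S` differs from `T` only on the top level and off the tower,
a set of measure at most `1 / (n + 1)` plus the measure the tower misses.
-/

open MeasureTheory Set Function symmDiff

namespace Function.LeftInverse

variable {α : Type*} {f g : α → α}

theorem iterate_iterate_of_le (h : LeftInverse g f) {a b : ℕ} (hab : a ≤ b) (x : α) :
    g^[a] (f^[b] x) = f^[b - a] x := by
  rw [← Nat.add_sub_cancel' hab, iterate_add_apply, h.iterate a, Nat.add_sub_cancel_left]

theorem iterate_iterate_of_ge (h : LeftInverse g f) {a b : ℕ} (hab : b ≤ a) (x : α) :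
    g^[a] (f^[b] x) = g^[a - b] x := by
  rw [← Nat.sub_add_cancel hab, iterate_add_apply, h.iterate b, Nat.add_sub_cancel]

end Function.LeftInverse

namespace Function

variable {α : Type*} {f : α → α} {n : ℕ}

theorem leftInverse_iterate_of_iterate_succ_eq_id
    (h : f^[n + 1] = id) : LeftInverse f^[n] f := fun x => by
  rw [← iterate_succ_apply, h, id]

theorem rightInverse_iterate_of_iterate_succ_eq_id
    (h : f^[n + 1] = id) : RightInverse f^[n] f := fun x => by
  rw [← iterate_succ_apply' f n, h, id]

end Function

section

variable {X : Type*}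

def NoReturnWithin (f : X → X) (N : ℕ) (B : Set X) : Prop :=
  ∀ k < N, ∀ x ∈ B, f^[k + 1] x ∉ B

section NoReturnWithin

variable {f : X → X} {N : ℕ} {B C : Set X}

theorem noReturnWithin_empty : NoReturnWithin f N ∅ := fun _ _ _ h => h.elim

theorem NoReturnWithin.mono (h : NoReturnWithin f N B) (hCB : C ⊆ B) : NoReturnWithin f N C :=
  fun k hk x hx hfx => h k hk x (hCB hx) (hCB hfx)

theorem noReturnWithin_iUnion {B : ℕ → Set X} (hmono : Monotone B)
    (h : ∀ i, NoReturnWithin f N (B i)) : NoReturnWithin f N (⋃ i, B i) := by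
  simp only [NoReturnWithin, mem_iUnion]
  rintro k hk x ⟨i, hx⟩ ⟨j, hfx⟩
  exact h (max i j) k hk x (hmono (le_max_left i j) hx) (hmono (le_max_right i j) hfx)

theorem NoReturnWithin.pairwiseDisjoint_preimage_iterate (h : NoReturnWithin f N B) :
    (Finset.range (N + 1) : Set ℕ).PairwiseDisjoint fun k => f^[k] ⁻¹' B := by
  intro i hi j hj hij
  wlog hlt : i < j generalizing i j
  · exact (this hj hi hij.symm (hij.lt_or_gt.resolve_left hlt)).symm
  simp only [Finset.coe_range, mem_Iio] at hi hj
  refine disjoint_left.2 fun x hxi hxj => h (j - i - 1) (by omega) _ hxi ?_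
  rwa [← iterate_add_apply, show j - i - 1 + 1 + i = j by omega]

end NoReturnWithin

variable [MeasurableSpace X]

theorem MeasurableEmbedding.iterate {f : X → X}
    (hf : MeasurableEmbedding f) : ∀ n, MeasurableEmbedding f^[n]
  | 0 => .id
  | n + 1 => (hf.iterate n).comp hf

namespace MeasurableEquiv

variable (T : X ≃ᵐ X)

theorem image_iterate (n : ℕ) (s : Set X) : (⇑T)^[n] '' s = (⇑T.symm)^[n] ⁻¹' s :=
  congrFun (image_eq_preimage_of_inverse (LeftInverse.iterate T.symm_apply_apply n)
    (RightInverse.iterate T.apply_symm_apply n)) s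

theorem measurableSet_image_iterate {s : Set X} (hs : MeasurableSet s) (n : ℕ) :
    MeasurableSet ((⇑T)^[n] '' s) := by
  rw [image_iterate]
  exact (T.symm.measurable.iterate n) hs

theorem exists_coe_eq_of_iterate_eq_id {f : X → X} (hf : Measurable f) {n : ℕ}
    (h : f^[n + 1] = id) : ∃ S : X ≃ᵐ X, ⇑S = f :=
  ⟨{ toFun := f
     invFun := f^[n]
     left_inv := leftInverse_iterate_of_iterate_succ_eq_id h
     right_inv := rightInverse_iterate_of_iterate_succ_eq_id h
     measurable_toFun := hf
     measurable_invFun := hf.iterate n }, rfl⟩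

end MeasurableEquiv

theorem exists_measurableSet_separating [MeasurableSpace.CountablySeparated X] :
    ∃ S : ℕ × Bool → Set X,
      (∀ i, MeasurableSet (S i)) ∧ ∀ x y, x ≠ y → ∃ i, x ∈ S i ∧ y ∉ S i := by
  obtain ⟨S, hSm, hS⟩ := exists_seq_separating X MeasurableSet.empty univ
  refine ⟨fun i => if i.2 then S i.1 else (S i.1)ᶜ, fun i => ?_, fun x y hxy => ?_⟩
  · dsimp only
    split_ifs
    exacts [hSm _, (hSm _).compl]
  · obtain ⟨k, hk⟩ : ∃ k, ¬(x ∈ S k ↔ y ∈ S k) := by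
      by_contra! h
      exact hxy (hS x trivial y trivial h)
    by_cases hx : x ∈ S k
    · exact ⟨(k, true), by simp_all⟩
    · exact ⟨(k, false), by simp_all⟩

theorem MeasureTheory.MeasurePreserving.of_eqOn_partition {α β ι : Type*} [MeasurableSpace α]
    [MeasurableSpace β] [Countable ι] {μ : Measure α} {ν : Measure β} {f : α → β}
    (hf : Measurable f) (hbij : Bijective f) {P : ι → Set α} (hPm : ∀ i, MeasurableSet (P i))
    (hPd : Pairwise (Disjoint on P)) (hPU : ⋃ i, P i = univ) {U : ι → α → β}
    (hU : ∀ i, MeasurePreserving (U i) μ ν) (hUe : ∀ i, MeasurableEmbedding (U i))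
    (hfU : ∀ i, EqOn f (U i) (P i)) : MeasurePreserving f μ ν := by
  refine ⟨hf, ?_⟩
  have himage : ∀ i, f '' P i = U i '' P i := fun i => (hfU i).image_eq
  calc μ.map f = (Measure.sum fun i => μ.restrict (P i)).map f := by
        rw [← Measure.restrict_iUnion hPd hPm, hPU, Measure.restrict_univ]
    _ = Measure.sum fun i => (μ.restrict (P i)).map (U i) := by
        rw [Measure.map_sum hf.aemeasurable]
        exact congrArg Measure.sum (funext fun i =>
          Measure.map_congr ((hfU i).eventuallyEq_of_mem (ae_restrict_mem (hPm i))))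
    _ = Measure.sum fun i => ν.restrict (f '' P i) := by
        simp_rw [himage, ((hU _).restrict_image_emb (hUe _) _).map_eq]
    _ = ν := by
        rw [← Measure.restrict_iUnion (fun i j hij => (disjoint_image_iff hbij.1).2 (hPd hij))
          (fun i => himage i ▸ (hUe i).measurableSet_image.2 (hPm i)), ← image_iUnion, hPU,
          image_univ_of_surjective hbij.2, Measure.restrict_univ]

theorem MeasureTheory.MeasurePreserving.natCast_mul_measureReal_le {μ : Measure X}
    [IsFiniteMeasure μ] {f : X → X} (hf : MeasurePreserving f μ μ) {B : Set X}
    (hB : MeasurableSet B) {m : ℕ}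
    (hd : (Finset.range m : Set ℕ).PairwiseDisjoint fun k => f^[k] ⁻¹' B) :
    m * μ.real B ≤ μ.real univ := by
  have := sum_measureReal_le_measureReal_univ (μ := μ)
    (fun k _ => (hf.measurable.iterate k) hB) hd
  simpa [(hf.iterate _).measureReal_preimage hB.nullMeasurableSet] using this

theorem measureReal_image_symmDiff_le {μ : Measure X} [IsFiniteMeasure μ] {S T : X ≃ᵐ X}
    (hS : MeasurePreserving S μ μ) (hT : MeasurePreserving T μ μ) {D : Set X}
    (hD : MeasurableSet D) (hST : ∀ x ∉ D, S x = T x) (A : Set X) :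
    μ.real ((T '' A) ∆ (S '' A)) ≤ 2 * μ.real D := by
  have hsub : (T '' A) ∆ (S '' A) ⊆ T '' D ∪ S '' D := by
    intro y hy
    rcases mem_symmDiff.1 hy with ⟨⟨a, ha, rfl⟩, hna⟩ | ⟨⟨a, ha, rfl⟩, hna⟩
    · exact Or.inl ⟨a, by_contra fun haD => hna ⟨a, ha, hST a haD⟩, rfl⟩
    · exact Or.inr ⟨a, by_contra fun haD => hna ⟨a, ha, (hST a haD).symm⟩, rfl⟩
  have himage : ∀ U : X ≃ᵐ X, MeasurePreserving U μ μ → μ.real (U '' D) = μ.real D :=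
    fun U hU => by
      rw [U.image_eq_preimage_symm, (hU.symm U).measureReal_preimage hD.nullMeasurableSet]
  calc μ.real ((T '' A) ∆ (S '' A)) ≤ μ.real (T '' D) + μ.real (S '' D) :=
        (measureReal_mono hsub).trans (measureReal_union_le _ _)
    _ = 2 * μ.real D := by rw [himage T hT, himage S hS, two_mul]

theorem exists_noReturnWithin_cover [MeasurableSpace.CountablySeparated X] {f : X → X}
    (hf : Measurable f) (N : ℕ) :
    ∃ D : ℕ → Set X, (∀ i, MeasurableSet (D i) ∧ NoReturnWithin f N (D i)) ∧
      {x | ∀ k < N, f^[k + 1] x ≠ x} ⊆ ⋃ i, D i := by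
  obtain ⟨S, hSm, hS⟩ := exists_measurableSet_separating (X := X)
  obtain ⟨t, ht⟩ := exists_surjective_nat (Fin N → ℕ × Bool)
  refine ⟨fun i => ⋂ k : Fin N, S (t i k) \ f^[k + 1] ⁻¹' S (t i k),
    fun i => ⟨?_, ?_⟩, ?_⟩
  · exact .iInter fun k => (hSm _).diff ((hf.iterate _) (hSm _))
  · intro k hk x hx hfx
    simp only [mem_iInter, Set.mem_sdiff, mem_preimage] at hx hfx
    exact (hx ⟨k, hk⟩).2 (hfx ⟨k, hk⟩).1
  · intro x hx
    choose s hs using fun k : Fin N => hS x _ (hx k k.2).symm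
    obtain ⟨i, rfl⟩ := ht s
    exact mem_iUnion.2 ⟨i, mem_iInter.2 fun k => hs k⟩

def orbitSaturation (T : X ≃ᵐ X) (B : Set X) : Set X :=
  ⋃ i : ℕ, ⋃ j : ℕ, (fun x => (⇑T.symm)^[j] ((⇑T)^[i] x)) ⁻¹' B

section OrbitSaturation

variable {T : X ≃ᵐ X} {N : ℕ} {B C : Set X}

theorem mem_orbitSaturation {x : X} :
    x ∈ orbitSaturation T B ↔ ∃ i j, (⇑T.symm)^[j] ((⇑T)^[i] x) ∈ B := by
  simp [orbitSaturation]

theorem measurableSet_orbitSaturation (hB : MeasurableSet B) :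
    MeasurableSet (orbitSaturation T B) :=
  .iUnion fun i => .iUnion fun j => ((T.symm.measurable.iterate j).comp (T.measurable.iterate i)) hB

theorem subset_orbitSaturation : B ⊆ orbitSaturation T B :=
  fun _ hx => mem_orbitSaturation.2 ⟨0, 0, hx⟩

theorem orbitSaturation_mono (h : B ⊆ C) : orbitSaturation T B ⊆ orbitSaturation T C :=
  iUnion_mono fun _ => iUnion_mono fun _ => preimage_mono h

theorem NoReturnWithin.union (hB : NoReturnWithin T N B) (hC : NoReturnWithin T N C)
    (hBC : Disjoint C (orbitSaturation T B)) : NoReturnWithin T N (B ∪ C) := by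
  rintro k hk x (hx | hx) (hTx | hTx)
  · exact hB k hk x hx hTx
  · refine disjoint_left.1 hBC hTx (mem_orbitSaturation.2 ⟨0, k + 1, ?_⟩)
    rwa [iterate_zero_apply, (LeftInverse.iterate T.symm_apply_apply _) x]
  · exact disjoint_left.1 hBC hx (mem_orbitSaturation.2 ⟨k + 1, 0, hTx⟩)
  · exact hC k hk x hx hTx

theorem exists_noReturnWithin_subset_orbitSaturation {D : ℕ → Set X}
    (hD : ∀ i, MeasurableSet (D i) ∧ NoReturnWithin T N (D i)) :
    ∃ B, MeasurableSet B ∧ NoReturnWithin T N B ∧ ⋃ i, D i ⊆ orbitSaturation T B := by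
  let C : ℕ → Set X := fun k => Nat.rec ∅ (fun k Ck => Ck ∪ (D k \ orbitSaturation T Ck)) k
  have hC_succ : ∀ k, C (k + 1) = C k ∪ (D k \ orbitSaturation T (C k)) := fun _ => rfl
  have hCmono : Monotone C := monotone_nat_of_le_succ fun k => by
    rw [hC_succ]
    exact subset_union_left
  have hC : ∀ k, MeasurableSet (C k) ∧ NoReturnWithin T N (C k) := by
    intro k
    induction k with
    | zero => exact ⟨.empty, noReturnWithin_empty⟩
    | succ k ih =>
      rw [hC_succ]
      exact ⟨ih.1.union ((hD k).1.diff (measurableSet_orbitSaturation ih.1)),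
        ih.2.union ((hD k).2.mono sdiff_subset) disjoint_sdiff_left⟩
  refine ⟨⋃ k, C k, .iUnion fun k => (hC k).1, noReturnWithin_iUnion hCmono fun k => (hC k).2,
    iUnion_subset fun k x hx => orbitSaturation_mono (subset_iUnion C (k + 1)) ?_⟩
  by_cases h : x ∈ orbitSaturation T (C k)
  · exact orbitSaturation_mono (hCmono k.le_succ) h
  · exact subset_orbitSaturation (by rw [hC_succ]; exact Or.inr ⟨hx, h⟩)

variable {μ : Measure X}

theorem ae_exists_symm_iterate_mem [IsFiniteMeasure μ] (hT : MeasurePreserving T μ μ)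
    (hB : MeasurableSet B) (hsat : ∀ᵐ x ∂μ, x ∈ orbitSaturation T B) :
    ∀ᵐ x ∂μ, ∃ m, (⇑T.symm)^[m] x ∈ B := by
  have hrec := (hT.symm T).conservative.ae_mem_imp_frequently_image_mem hB.nullMeasurableSet
  have hrec' : ∀ i j : ℕ, ∀ᵐ x ∂μ, (⇑T.symm)^[j] ((⇑T)^[i] x) ∈ B →
      ∃ᶠ m in Filter.atTop, (⇑T.symm)^[m] ((⇑T.symm)^[j] ((⇑T)^[i] x)) ∈ B := fun i j =>
    (((hT.symm T).iterate j).comp (hT.iterate i)).quasiMeasurePreserving.ae hrec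
  filter_upwards [hsat, ae_all_iff.2 fun i => ae_all_iff.2 (hrec' i)] with x hx hxrec
  obtain ⟨i, j, hij⟩ := mem_orbitSaturation.1 hx
  obtain ⟨m, hm, hmB⟩ := (hxrec i j hij).forall_exists_of_atTop i
  refine ⟨m + j - i, ?_⟩
  rwa [← iterate_add_apply,
    LeftInverse.iterate_iterate_of_ge T.symm_apply_apply (by omega)] at hmB

theorem exists_noReturnWithin_ae_exists_symm_iterate_mem [MeasurableSpace.CountablySeparated X]
    [IsFiniteMeasure μ] (hT : MeasurePreserving T μ μ)
    (haper : ∀ n : ℕ, 1 ≤ n → μ {x | (⇑T)^[n] x = x} = 0) (N : ℕ) :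
    ∃ B, MeasurableSet B ∧ NoReturnWithin T N B ∧
      ∀ᵐ x ∂μ, ∃ m, (⇑T.symm)^[m] x ∈ B := by
  obtain ⟨D, hD, hcover⟩ := exists_noReturnWithin_cover T.measurable N
  obtain ⟨B, hB, hBN, hDB⟩ := exists_noReturnWithin_subset_orbitSaturation hD
  refine ⟨B, hB, hBN, ae_exists_symm_iterate_mem hT hB ?_⟩
  have hnotfix : ∀ k, ∀ᵐ x ∂μ, (⇑T)^[k + 1] x ≠ x := fun k =>
    measure_eq_zero_iff_ae_notMem.1 (haper (k + 1) le_add_self)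
  filter_upwards [ae_all_iff.2 hnotfix] with x hx
  exact hDB (hcover fun k _ => hx k)

end OrbitSaturation

def skyscraperLevel (T : X ≃ᵐ X) (B : Set X) (m : ℕ) : Set X :=
  (⇑T.symm)^[m] ⁻¹' B \ ⋃ i < m, (⇑T.symm)^[i] ⁻¹' B

def rokhlinBase (T : X ≃ᵐ X) (B : Set X) (n : ℕ) : Set X :=
  (⋃ q, skyscraperLevel T B (n * q)) \ ⋃ k ∈ Finset.Ioo 0 n, (⇑T)^[k] ⁻¹' B

def rokhlinTower (T : X ≃ᵐ X) (E : Set X) (n : ℕ) : Set X :=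
  ⋃ i ∈ Finset.range n, (⇑T)^[i] '' E

def IsTowerBase (T : X ≃ᵐ X) (E : Set X) (n : ℕ) : Prop :=
  ∀ i j, i < n → j < n → i ≠ j → Disjoint ((⇑T)^[i] '' E) ((⇑T)^[j] '' E)

section Skyscraper

variable {T : X ≃ᵐ X} {B : Set X} {x : X} {a n : ℕ}

theorem mem_skyscraperLevel :
    x ∈ skyscraperLevel T B a ↔
      (⇑T.symm)^[a] x ∈ B ∧ ∀ i < a, (⇑T.symm)^[i] x ∉ B := by
  simp [skyscraperLevel]

theorem mem_rokhlinBase :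
    x ∈ rokhlinBase T B n ↔
      (∃ q, x ∈ skyscraperLevel T B (n * q)) ∧
        ∀ k, 0 < k → k < n → (⇑T)^[k] x ∉ B := by
  simp [rokhlinBase, and_imp]

theorem measurableSet_rokhlinBase (hB : MeasurableSet B) : MeasurableSet (rokhlinBase T B n) := by
  have hsymm := fun i => (T.symm.measurable.iterate i) hB
  exact (MeasurableSet.iUnion fun q =>
    (hsymm _).diff (.biUnion (to_countable _) fun i _ => hsymm i)).diff
      (.biUnion (to_countable _) fun k _ => (T.measurable.iterate k) hB)

theorem measurableSet_rokhlinTower {E : Set X} (hE : MeasurableSet E) :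
    MeasurableSet (rokhlinTower T E n) :=
  .biUnion (to_countable _) fun i _ => T.measurableSet_image_iterate hE i

theorem eq_of_mem_skyscraperLevel {b : ℕ} (ha : x ∈ skyscraperLevel T B a)
    (hb : x ∈ skyscraperLevel T B b) : a = b := by
  rw [mem_skyscraperLevel] at ha hb
  by_contra h
  rcases Nat.lt_or_gt_of_ne h with h | h
  exacts [hb.2 a h ha.1, ha.2 b h hb.1]

theorem exists_mem_skyscraperLevel (h : ∃ m, (⇑T.symm)^[m] x ∈ B) :
    ∃ a, x ∈ skyscraperLevel T B a := by
  classical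
  exact ⟨Nat.find h, mem_skyscraperLevel.2 ⟨Nat.find_spec h, fun i hi => Nat.find_min h hi⟩⟩

theorem iterate_mem_skyscraperLevel {i : ℕ} (hx : x ∈ skyscraperLevel T B a)
    (hi : ∀ k, 0 < k → k ≤ i → (⇑T)^[k] x ∉ B) :
    (⇑T)^[i] x ∈ skyscraperLevel T B (a + i) := by
  have hinv : LeftInverse T.symm T := T.symm_apply_apply
  rw [mem_skyscraperLevel] at hx ⊢
  refine ⟨by rw [hinv.iterate_iterate_of_ge (by omega), Nat.add_sub_cancel]; exact hx.1,
    fun m hm => ?_⟩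
  rcases lt_or_ge m i with hmi | hmi
  · rw [hinv.iterate_iterate_of_le hmi.le]
    exact hi _ (by omega) (by omega)
  · rw [hinv.iterate_iterate_of_ge hmi]
    exact hx.2 _ (by omega)

theorem symm_iterate_mem_skyscraperLevel {s : ℕ} (hx : x ∈ skyscraperLevel T B a)
    (hs : s ≤ a) :
    (⇑T.symm)^[s] x ∈ skyscraperLevel T B (a - s) := by
  rw [mem_skyscraperLevel] at hx ⊢
  simp only [← iterate_add_apply]
  exact ⟨by rw [Nat.sub_add_cancel hs]; exact hx.1, fun i hi => hx.2 _ (by omega)⟩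

theorem isTowerBase_rokhlinBase : IsTowerBase T (rokhlinBase T B n) n := by
  intro i j hi hj hij
  refine disjoint_left.2 ?_
  rintro _ ⟨x, hx, rfl⟩ ⟨y, hy, hyx⟩
  rw [mem_rokhlinBase] at hx hy
  obtain ⟨⟨q, hxq⟩, hxB⟩ := hx
  obtain ⟨⟨r, hyr⟩, hyB⟩ := hy
  have hx' := iterate_mem_skyscraperLevel (i := i) hxq fun k hk hki => hxB k hk (by omega)
  have hy' := iterate_mem_skyscraperLevel (i := j) hyr fun k hk hkj => hyB k hk (by omega)
  rw [hyx] at hy'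
  -- the common point lies at levels `≡ i` and `≡ j` modulo `n`
  have hmod := congrArg (· % n) (eq_of_mem_skyscraperLevel hx' hy')
  simp only [Nat.mul_add_mod, Nat.mod_eq_of_lt hi, Nat.mod_eq_of_lt hj] at hmod
  exact hij hmod

theorem mem_rokhlinTower_rokhlinBase (hn : 0 < n) (hx : ∃ m, (⇑T.symm)^[m] x ∈ B)
    (hxB : ∀ k, 0 < k → k < n → (⇑T)^[k] x ∉ B) :
    x ∈ rokhlinTower T (rokhlinBase T B n) n := by
  have hinv : LeftInverse T T.symm := T.apply_symm_apply
  obtain ⟨a, ha⟩ := exists_mem_skyscraperLevel hx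
  -- `x = T^s y` for `s = a % n` and `y = T^{-s} x`, which sits at level `n * (a / n)`
  have hs : a % n < n := Nat.mod_lt a hn
  have hsa : a % n ≤ a := Nat.mod_le a n
  refine mem_biUnion (Finset.mem_range.2 hs) ⟨(⇑T.symm)^[a % n] x, ?_, hinv.iterate _ x⟩
  refine mem_rokhlinBase.2 ⟨⟨a / n, ?_⟩, fun k hk hkn => ?_⟩
  · convert symm_iterate_mem_skyscraperLevel ha hsa using 2
    have := Nat.div_add_mod a n
    omega
  · rcases le_or_gt k (a % n) with hks | hks
    · rw [hinv.iterate_iterate_of_le hks]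
      exact (mem_skyscraperLevel.1 ha).2 _ (by omega)
    · rw [hinv.iterate_iterate_of_ge hks.le]
      exact hxB _ (by omega) (by omega)

end Skyscraper

section Rokhlin

variable {T : X ≃ᵐ X} {μ : Measure X}

theorem IsTowerBase.natCast_mul_measureReal_le [IsFiniteMeasure μ] {E : Set X} {n : ℕ}
    (hbase : IsTowerBase T E n) (hT : MeasurePreserving T μ μ) (hE : MeasurableSet E) :
    n * μ.real E ≤ μ.real univ := by
  refine (hT.symm T).natCast_mul_measureReal_le hE fun i hi j hj hij => ?_
  simp only [Finset.coe_range, mem_Iio] at hi hj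
  simpa only [← T.image_iterate] using hbase i j hi hj hij

theorem exists_rokhlin_tower [MeasurableSpace.CountablySeparated X] [IsProbabilityMeasure μ]
    (hT : MeasurePreserving T μ μ)
    (haper : ∀ n : ℕ, 1 ≤ n → μ {x | (⇑T)^[n] x = x} = 0) {ε : ℝ} (hε : 0 < ε)
    {n : ℕ} (hn : 1 ≤ n) :
    ∃ E : Set X, MeasurableSet E ∧ IsTowerBase T E n ∧
      μ (rokhlinTower T E n)ᶜ < ENNReal.ofReal ε := by
  set N := ⌈n / ε⌉₊
  obtain ⟨B, hB, hBN, hvisit⟩ := exists_noReturnWithin_ae_exists_symm_iterate_mem hT haper N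
  refine ⟨rokhlinBase T B n, measurableSet_rokhlinBase hB, isTowerBase_rokhlinBase, ?_⟩
  have hcover : (rokhlinTower T (rokhlinBase T B n) n)ᶜ ⊆
      {x | ¬∃ m, (⇑T.symm)^[m] x ∈ B} ∪ ⋃ k ∈ Finset.range n, (⇑T)^[k] ⁻¹' B := by
    intro x hx
    refine (em (∃ m, (⇑T.symm)^[m] x ∈ B)).elim (fun hvis => Or.inr ?_) Or.inl
    by_contra h
    exact hx (mem_rokhlinTower_rokhlinBase hn hvis fun k _ hkn hkB =>
      h (mem_biUnion (Finset.mem_range.2 hkn) hkB))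
  have hnull : μ.real {x | ¬∃ m, (⇑T.symm)^[m] x ∈ B} = 0 := by
    rw [measureReal_def, ae_iff.1 hvisit, ENNReal.toReal_zero]
  have hBμ : (N + 1) * μ.real B ≤ 1 := by
    simpa using hT.natCast_mul_measureReal_le hB hBN.pairwiseDisjoint_preimage_iterate
  have hnN : n ≤ N * ε := (div_le_iff₀ hε).1 (Nat.le_ceil _)
  rw [ENNReal.lt_ofReal_iff_toReal_lt (measure_ne_top _ _)]
  calc μ.real (rokhlinTower T (rokhlinBase T B n) n)ᶜ
      ≤ μ.real {x | ¬∃ m, (⇑T.symm)^[m] x ∈ B} +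
          ∑ k ∈ Finset.range n, μ.real ((⇑T)^[k] ⁻¹' B) :=
        (measureReal_mono hcover).trans <| (measureReal_union_le _ _).trans <|
          add_le_add le_rfl (measureReal_biUnion_finset_le _ _)
    _ = n * μ.real B := by
        rw [hnull, zero_add, Finset.sum_congr rfl fun k _ =>
          (hT.iterate k).measureReal_preimage hB.nullMeasurableSet]
        simp
    _ ≤ n * (1 / (N + 1)) := by
        gcongr
        rw [le_div_iff₀ (by positivity)]
        linarith
    _ < ε := by
        rw [mul_one_div, div_lt_iff₀ (by positivity)]
        linarith

end Rokhlin

-- Rotates the tower `E, T E, …, T^n E`, of height `n + 1`.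
open Classical in
noncomputable def towerRotation (T : X ≃ᵐ X) (E : Set X) (n : ℕ) (x : X) : X :=
  if x ∈ (⇑T)^[n] '' E then (⇑T.symm)^[n] x else if x ∈ rokhlinTower T E n then T x else x

section TowerRotation

variable {T : X ≃ᵐ X} {E : Set X} {n : ℕ} {x : X}

theorem rokhlinTower_succ : rokhlinTower T E (n + 1) = rokhlinTower T E n ∪ (⇑T)^[n] '' E := by
  simp [rokhlinTower, Finset.range_add_one, union_comm]

theorem IsTowerBase.disjoint_rokhlinTower_image_iterate (hbase : IsTowerBase T E (n + 1)) :
    Disjoint (rokhlinTower T E n) ((⇑T)^[n] '' E) := by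
  simp only [rokhlinTower, disjoint_iUnion_left, Finset.mem_range]
  exact fun i hi => hbase i n (by omega) (by omega) hi.ne

theorem towerRotation_of_mem_rokhlinTower (hbase : IsTowerBase T E (n + 1))
    (hx : x ∈ rokhlinTower T E n) :
    towerRotation T E n x = T x := by
  rw [towerRotation, if_neg (disjoint_left.1 hbase.disjoint_rokhlinTower_image_iterate hx),
    if_pos hx]

theorem towerRotation_of_notMem (hx : x ∉ rokhlinTower T E (n + 1)) :
    towerRotation T E n x = x := by
  rw [rokhlinTower_succ, mem_union, not_or] at hx
  rw [towerRotation, if_neg hx.2, if_neg hx.1]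

theorem iterate_towerRotation_of_mem (hbase : IsTowerBase T E (n + 1)) {e : X} (he : e ∈ E)
    {i : ℕ} (hi : i ≤ n) :
    (towerRotation T E n)^[i] e = (⇑T)^[i] e := by
  induction i with
  | zero => rfl
  | succ i ih =>
    rw [iterate_succ_apply', ih (by omega), towerRotation_of_mem_rokhlinTower hbase
      (mem_biUnion (Finset.mem_range.2 (by omega)) ⟨e, he, rfl⟩), ← iterate_succ_apply' T]

theorem iterate_towerRotation (hbase : IsTowerBase T E (n + 1)) :
    (towerRotation T E n)^[n + 1] = id := by
  have hfix : ∀ e ∈ E, (towerRotation T E n)^[n + 1] e = e := fun e he => by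
    rw [iterate_succ_apply', iterate_towerRotation_of_mem hbase he le_rfl, towerRotation,
      if_pos ⟨e, he, rfl⟩, (LeftInverse.iterate T.symm_apply_apply n) e]
  funext x
  by_cases hx : x ∈ rokhlinTower T E (n + 1)
  · obtain ⟨i, hi, e, he, rfl⟩ : ∃ i < n + 1, ∃ e ∈ E, (⇑T)^[i] e = x := by
      simpa [rokhlinTower] using hx
    rw [← iterate_towerRotation_of_mem hbase he (by omega), ← iterate_add_apply, add_comm,
      iterate_add_apply, hfix e he, id]
  · exact iterate_fixed (towerRotation_of_notMem hx) _

theorem measurable_towerRotation (hE : MeasurableSet E) : Measurable (towerRotation T E n) :=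
  Measurable.ite (T.measurableSet_image_iterate hE n) (T.symm.measurable.iterate n)
    (Measurable.ite (measurableSet_rokhlinTower hE) T.measurable measurable_id)

theorem measurePreserving_towerRotation {μ : Measure X} (hbase : IsTowerBase T E (n + 1))
    (hT : MeasurePreserving T μ μ) (hE : MeasurableSet E) :
    MeasurePreserving (towerRotation T E n) μ μ := by
  have hperiod := iterate_towerRotation hbase
  have hdisj := hbase.disjoint_rokhlinTower_image_iterate
  refine .of_eqOn_partition (measurable_towerRotation hE)
    ⟨(leftInverse_iterate_of_iterate_succ_eq_id hperiod).injective,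
      (rightInverse_iterate_of_iterate_succ_eq_id hperiod).surjective⟩
    (P := ![rokhlinTower T E n, (⇑T)^[n] '' E, (rokhlinTower T E (n + 1))ᶜ])
    (U := ![⇑T, (⇑T.symm)^[n], id]) ?_ ?_ ?_ ?_ ?_ ?_
  · intro i
    fin_cases i
    exacts [measurableSet_rokhlinTower hE, T.measurableSet_image_iterate hE n,
      (measurableSet_rokhlinTower hE).compl]
  · have hM : rokhlinTower T E n ⊆ rokhlinTower T E (n + 1) := by
      rw [rokhlinTower_succ]
      exact subset_union_left
    have hTop : (⇑T)^[n] '' E ⊆ rokhlinTower T E (n + 1) := by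
      rw [rokhlinTower_succ]
      exact subset_union_right
    intro i j hij
    fin_cases i <;> fin_cases j <;>
      simp [onFun, hdisj, hdisj.symm, hM, hTop, disjoint_compl_right_iff_subset,
        disjoint_compl_left_iff_subset] at hij ⊢
  · refine eq_univ_of_forall fun x => mem_iUnion.2 ?_
    by_cases hx : x ∈ rokhlinTower T E (n + 1)
    · rw [rokhlinTower_succ] at hx
      rcases hx with hx | hx
      exacts [⟨0, hx⟩, ⟨1, hx⟩]
    · exact ⟨2, hx⟩
  · intro i
    fin_cases i
    exacts [hT, (hT.symm T).iterate n, MeasurePreserving.id μ]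
  · intro i
    fin_cases i
    exacts [T.measurableEmbedding, T.symm.measurableEmbedding.iterate n, .id]
  · intro i
    fin_cases i
    · exact fun x hx => towerRotation_of_mem_rokhlinTower hbase hx
    · exact fun x hx => if_pos hx
    · exact fun x hx => towerRotation_of_notMem hx

theorem exists_periodic_measureReal_image_symmDiff_le {μ : Measure X} [IsFiniteMeasure μ]
    (hbase : IsTowerBase T E (n + 1)) (hT : MeasurePreserving T μ μ) (hE : MeasurableSet E) :
    ∃ S : X ≃ᵐ X, MeasurePreserving S μ μ ∧ (⇑S)^[n + 1] = id ∧
      ∀ A : Set X, μ.real ((T '' A) ∆ (S '' A)) ≤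
        2 * (μ.real E + μ.real (rokhlinTower T E (n + 1))ᶜ) := by
  obtain ⟨S, hS⟩ := MeasurableEquiv.exists_coe_eq_of_iterate_eq_id (measurable_towerRotation hE)
    (iterate_towerRotation hbase)
  have hSμ : MeasurePreserving S μ μ := hS ▸ measurePreserving_towerRotation hbase hT hE
  have hD := (T.measurableSet_image_iterate hE n).union
    (measurableSet_rokhlinTower (T := T) (n := n + 1) hE).compl
  have hST : ∀ x ∉ (⇑T)^[n] '' E ∪ (rokhlinTower T E (n + 1))ᶜ, S x = T x := by
    intro x hx
    rw [mem_union, not_or, mem_compl_iff, not_not, rokhlinTower_succ] at hx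
    exact hS ▸ towerRotation_of_mem_rokhlinTower hbase (hx.2.resolve_right hx.1)
  refine ⟨S, hSμ, hS ▸ iterate_towerRotation hbase, fun A => ?_⟩
  calc μ.real ((T '' A) ∆ (S '' A))
      ≤ 2 * μ.real ((⇑T)^[n] '' E ∪ (rokhlinTower T E (n + 1))ᶜ) :=
        measureReal_image_symmDiff_le hSμ hT hD hST A
    _ ≤ 2 * (μ.real E + μ.real (rokhlinTower T E (n + 1))ᶜ) := by
        rw [T.image_iterate, ← (hT.symm T).iterate n |>.measureReal_preimage hE.nullMeasurableSet]
        gcongr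
        exact measureReal_union_le _ _

end TowerRotation

end

theorem rokhlin_and_uniform_approx_by_periodic_general {X : Type*} [MeasurableSpace X]
    [StandardBorelSpace X] (μ : Measure X) [IsProbabilityMeasure μ]
    (T : X ≃ᵐ X) (hT : MeasurePreserving T μ μ)
    (haper : ∀ n : ℕ, 1 ≤ n → μ {x | (⇑T)^[n] x = x} = 0) :
    (∀ ε > (0 : ℝ), ∀ n : ℕ, 1 ≤ n → ∃ E : Set X, MeasurableSet E ∧
      (∀ i j : ℕ, i < n → j < n → i ≠ j → Disjoint ((⇑T)^[i] '' E) ((⇑T)^[j] '' E)) ∧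
      μ ((⋃ i ∈ Finset.range n, (⇑T)^[i] '' E)ᶜ) < ENNReal.ofReal ε) ∧
    (∀ ε > (0 : ℝ), ∃ S : X ≃ᵐ X, MeasurePreserving S μ μ ∧
      (∃ n : ℕ, 1 ≤ n ∧ ∀ x : X, (⇑S)^[n] x = x) ∧
      (⨆ A : {s : Set X // MeasurableSet s},
        (μ ((T '' A.1) ∆ (S '' A.1))).toReal) < ε) := by
  refine ⟨fun ε hε n hn => exists_rokhlin_tower hT haper hε hn, fun ε hε => ?_⟩
  obtain ⟨n, hn⟩ := exists_nat_one_div_lt (by positivity : 0 < ε / 4)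
  obtain ⟨E, hE, hbase, hcompl⟩ :=
    exists_rokhlin_tower hT haper (by positivity : 0 < ε / 4) (Nat.le_add_left 1 n)
  obtain ⟨S, hS, hper, hdist⟩ := exists_periodic_measureReal_image_symmDiff_le hbase hT hE
  have hEμ : μ.real E ≤ 1 / (n + 1) := by
    rw [le_div_iff₀ (by positivity), mul_comm]
    simpa using hbase.natCast_mul_measureReal_le hT hE
  have hcompl' : μ.real (rokhlinTower T E (n + 1))ᶜ < ε / 4 :=
    ENNReal.toReal_lt_of_lt_ofReal hcompl
  have : Nonempty {s : Set X // MeasurableSet s} := ⟨⟨∅, .empty⟩⟩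
  have hsup : ∀ A : {s : Set X // MeasurableSet s}, (μ ((T '' A.1) ∆ (S '' A.1))).toReal ≤
      2 * (μ.real E + μ.real (rokhlinTower T E (n + 1))ᶜ) := fun A => hdist A.1
  exact ⟨S, hS, ⟨n + 1, Nat.le_add_left 1 n, fun x => congrFun hper x⟩,
    (ciSup_le hsup).trans_lt (by linarith)⟩

/-- Rokhlin's lemma and its consequence: if `T` is an aperiodic measure-preserving
automorphism of a standard atomless probability space, then for every `ε > 0` and `n ≥ 1`
there is a measurable set `E` with `E, TE, …, T^{n-1}E` pairwise disjoint whose union has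
measure `> 1 - ε`; consequently `T` lies in the uniform-metric closure of the periodic
automorphisms: for every `ε > 0` there is a measure-preserving `S` with `S^n = id` for
some `n ≥ 1` and `sup_A μ(TA ∆ SA) < ε`. -/
theorem rokhlin_and_uniform_approx_by_periodic {X : Type*} [MeasurableSpace X]
    [StandardBorelSpace X] [Nonempty X] (μ : Measure X) [IsProbabilityMeasure μ] [NullSingletonClass μ]
    (T : X ≃ᵐ X) (hT : MeasurePreserving T μ μ)
    (haper : ∀ n : ℕ, 1 ≤ n → μ {x | (⇑T)^[n] x = x} = 0) :
    (∀ ε > (0 : ℝ), ∀ n : ℕ, 1 ≤ n → ∃ E : Set X, MeasurableSet E ∧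
      (∀ i j : ℕ, i < n → j < n → i ≠ j → Disjoint ((⇑T)^[i] '' E) ((⇑T)^[j] '' E)) ∧
      μ ((⋃ i ∈ Finset.range n, (⇑T)^[i] '' E)ᶜ) < ENNReal.ofReal ε) ∧
    (∀ ε > (0 : ℝ), ∃ S : X ≃ᵐ X, MeasurePreserving S μ μ ∧
      (∃ n : ℕ, 1 ≤ n ∧ ∀ x : X, (⇑S)^[n] x = x) ∧
      (⨆ A : {s : Set X // MeasurableSet s},
        (μ ((T '' A.1) ∆ (S '' A.1))).toReal) < ε) :=
  rokhlin_and_uniform_approx_by_periodic_general μ T hT haper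
end
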